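/- arXiv:2512.03758 — 5 statements merged into one kernel-verified Lean document; each statement's English description precedes it below -/
import Mathlib

section
/- Let A = \sum_{i=k_1}^{k_2} |i\rangle\langle i| \otimes A_i be a block-diagonal matrix of size k·2^N × k·2^N with 1 ≤ k_1 ≤ k_2 ≤ k, where each A_i is an N-qubit matrix with an (\alpha_i, n_i, 0)-block-encoding. Then there exists an (\alpha, n, 0)-block-encoding of A with \alpha = \max_{i \in \{k_1, ..., k_2\}} \alpha_i and n = \max_{i \in \{k_1, ..., k_2\}} n_i + 1. -/
/-- An `(α, n, 0)`-block-encoding of a square matrix `A` acting on an index set `ι`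
is a unitary `U` on `ι × Fin (2^n)` with `A i j = α * U (i,0) (j,0)`. -/
def IsBlockEncoding {ι : Type*} [Fintype ι] [DecidableEq ι] (n : ℕ) (α : ℝ)
    (A : Matrix ι ι ℂ)
    (U : Matrix (ι × Fin (2 ^ n)) (ι × Fin (2 ^ n)) ℂ) : Prop :=
  U ∈ Matrix.unitaryGroup (ι × Fin (2 ^ n)) ℂ ∧
    ∀ i j : ι, A i j = (α : ℂ) * U (i, ⟨0, Nat.two_pow_pos n⟩) (j, ⟨0, Nat.two_pow_pos n⟩)

open Matrix in

lemma blockDiagonal_unitary {p o : Type*} [Fintype p] [DecidableEq p] [Fintype o] [DecidableEq o]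
    (f : o → Matrix p p ℂ) (hf : ∀ i, f i ∈ Matrix.unitaryGroup p ℂ) :
    Matrix.blockDiagonal f ∈ Matrix.unitaryGroup (p × o) ℂ := by
  rw [Matrix.mem_unitaryGroup_iff']
  rw [show star (blockDiagonal f) = blockDiagonal (fun i => star (f i)) from
    blockDiagonal_conjTranspose f, ← blockDiagonal_mul]
  have : (fun i => star (f i) * f i) = fun _ : o => (1 : Matrix p p ℂ) := by
    funext i; exact Matrix.mem_unitaryGroup_iff'.mp (hf i)
  rw [this, show (fun _ : o => (1 : Matrix p p ℂ)) = 1 from rfl, blockDiagonal_one]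

lemma reindex_unitary {p q : Type*} [Fintype p] [DecidableEq p] [Fintype q] [DecidableEq q]
    (e : p ≃ q) (M : Matrix p p ℂ) (hM : M ∈ Matrix.unitaryGroup p ℂ) :
    Matrix.reindex e e M ∈ Matrix.unitaryGroup q ℂ := by
  rw [Matrix.mem_unitaryGroup_iff'] at hM ⊢
  simp only [Matrix.reindex_apply, Matrix.star_eq_conjTranspose, Matrix.conjTranspose_submatrix]
  rw [Matrix.submatrix_mul_equiv, ← Matrix.star_eq_conjTranspose, hM, Matrix.submatrix_one_equiv]

lemma permMat_unitary {p : Type*} [Fintype p] [DecidableEq p] (e : p ≃ p) :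
    (Matrix.of fun a b : p => if e b = a then (1:ℂ) else 0) ∈ Matrix.unitaryGroup p ℂ := by
  rw [Matrix.mem_unitaryGroup_iff']
  ext a b
  simp [Matrix.mul_apply, Matrix.conjTranspose_apply, apply_ite, ite_and, Matrix.one_apply,
    Finset.sum_ite_eq, Finset.sum_ite_eq', eq_comm]

lemma rot_unitary (c s : ℝ) (h : c^2 + s^2 = 1) :
    (!![(c:ℂ), -(s:ℂ); (s:ℂ), (c:ℂ)]) ∈ Matrix.unitaryGroup (Fin 2) ℂ := by
  rw [Matrix.mem_unitaryGroup_iff']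
  ext i j
  fin_cases i <;> fin_cases j <;>
    simp [Matrix.mul_apply, Fin.sum_univ_two, Matrix.conjTranspose_apply, Matrix.one_apply] <;>
    push_cast <;> ring_nf <;> norm_cast <;> nlinarith [h]

open Matrix in
lemma dilate {N ni m : ℕ} (hni : ni ≤ m) {αi αs : ℝ} (h0 : 0 ≤ αi) (hle : αi ≤ αs)
    (hs : 0 < αs) (A : Matrix (Fin (2^N)) (Fin (2^N)) ℂ)
    (U : Matrix (Fin (2^N) × Fin (2^ni)) (Fin (2^N) × Fin (2^ni)) ℂ)
    (hU : IsBlockEncoding ni αi A U) :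
    ∃ W, IsBlockEncoding (m+1) αs A W := by
  classical
  set c : ℝ := αi / αs with hc
  have hc0 : 0 ≤ c := div_nonneg h0 hs.le
  have hc1 : c ≤ 1 := (div_le_one hs).mpr hle
  set s : ℝ := Real.sqrt (1 - c^2) with hsdef
  have hsq : c^2 + s^2 = 1 := by
    have : s^2 = 1 - c^2 := Real.sq_sqrt (by nlinarith)
    linarith
  set R : Matrix (Fin 2) (Fin 2) ℂ := !![(c:ℂ), -(s:ℂ); (s:ℂ), (c:ℂ)] with hR
  have hRu := rot_unitary c s hsq
  have hcard : 2^ni * (2^(m-ni) * 2) = 2^(m+1) := by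
    rw [← pow_succ, ← pow_add]; congr 1; omega
  set E : Fin (2^(m+1)) ≃ Fin (2^ni) × (Fin (2^(m-ni)) × Fin 2) :=
    (finCongr hcard.symm).trans (finProdFinEquiv.symm.trans
      (Equiv.prodCongr (Equiv.refl _) finProdFinEquiv.symm)) with hE
  set z0 : Fin (2^(m+1)) := ⟨0, Nat.two_pow_pos _⟩ with hz0
  set a0 : Fin (2^ni) := ⟨0, Nat.two_pow_pos _⟩ with ha0
  set b0 : Fin (2^(m-ni)) := ⟨0, Nat.two_pow_pos _⟩ with hb0
  have hE0 : E z0 = (a0, (b0, (0 : Fin 2))) := by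
    simp [hE, finCongr_apply, Prod.ext_iff, Fin.ext_iff, Fin.divNat, Fin.modNat,
      hz0, ha0, hb0]
  let E₂ : (Fin (2^N) × Fin (2^ni)) × (Fin (2^(m-ni)) × Fin 2) ≃
      Fin (2^N) × (Fin (2^ni) × (Fin (2^(m-ni)) × Fin 2)) :=
    ⟨fun x => (x.1.1, (x.1.2, x.2)), fun y => ((y.1, y.2.1), y.2.2), fun _ => rfl, fun _ => rfl⟩
  let E₃ : (Fin 2 × (Fin (2^N) × (Fin (2^ni) × Fin (2^(m-ni))))) ≃
      Fin (2^N) × (Fin (2^ni) × (Fin (2^(m-ni)) × Fin 2)) :=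
    ⟨fun x => (x.2.1, (x.2.2.1, (x.2.2.2, x.1))), fun y => (y.2.2.2, (y.1, (y.2.1, y.2.2.1))),
      fun _ => rfl, fun _ => rfl⟩
  let f : (Fin (2^(m-ni)) × Fin 2) → Matrix (Fin (2^N) × Fin (2^ni)) (Fin (2^N) × Fin (2^ni)) ℂ :=
    fun eb => if eb.2 = 0 then U else 1
  let D := Matrix.reindex E₂ E₂ (Matrix.blockDiagonal f)
  let G := Matrix.reindex E₃ E₃
    (Matrix.blockDiagonal (fun _ : Fin (2^N) × (Fin (2^ni) × Fin (2^(m-ni))) => R))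
  let W' := G * D
  have hW'u : W' ∈ Matrix.unitaryGroup _ ℂ := by
    refine mul_mem (reindex_unitary _ _ (blockDiagonal_unitary _ fun _ => hRu))
      (reindex_unitary _ _ (blockDiagonal_unitary _ fun eb => ?_))
    by_cases h : eb.2 = 0 <;> simp only [f, h, if_true, if_false, if_neg]
    · exact hU.1
    · exact one_mem _
  have key : ∀ x y : Fin (2^N),
      W' (x, (a0, (b0, 0))) (y, (a0, (b0, 0))) = (c : ℂ) * U (x, a0) (y, a0) := by
    intro x y
    rw [show W' = G * D from rfl, Matrix.mul_apply]
    rw [Finset.sum_eq_single (x, (a0, (b0, (0:Fin 2))))]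
    · simp [G, D, Matrix.reindex_apply, Matrix.submatrix_apply, Matrix.blockDiagonal_apply,
        E₂, E₃, f, hR]
    · rintro ⟨x', a', e', b'⟩ - hr
      by_cases h1 : (x, (a0, b0)) = (x', (a', e'))
      · have hb' : b' ≠ 0 := by
          rintro rfl
          apply hr
          obtain ⟨h1, h2, h3⟩ := Prod.mk.injEq .. ▸ h1
          simp_all [Prod.ext_iff]
        have : D (x', (a', (e', b'))) (y, (a0, (b0, 0))) = 0 := by
          simp [D, Matrix.reindex_apply, Matrix.submatrix_apply, Matrix.blockDiagonal_apply,
            E₂, hb']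
        rw [this, mul_zero]
      · have : G (x, (a0, (b0, 0))) (x', (a', (e', b'))) = 0 := by
          simp only [G, Matrix.reindex_apply, Matrix.submatrix_apply,
            Matrix.blockDiagonal_apply, E₃]
          rw [if_neg]
          exact fun h => h1 (by simpa [Prod.ext_iff] using h)
        rw [this, zero_mul]
    · intro h; exact absurd (Finset.mem_univ _) h
  refine ⟨Matrix.reindex (Equiv.prodCongr (Equiv.refl (Fin (2^N))) E.symm)
      (Equiv.prodCongr (Equiv.refl _) E.symm) W', reindex_unitary _ _ hW'u, ?_⟩
  intro x y
  have hentry : (Matrix.reindex (Equiv.prodCongr (Equiv.refl (Fin (2^N))) E.symm)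
      (Equiv.prodCongr (Equiv.refl _) E.symm) W') (x, z0) (y, z0)
      = W' (x, E z0) (y, E z0) := rfl
  rw [hentry, hE0, key x y, hU.2 x y]
  rw [← mul_assoc]
  congr 1
  rw [hc]
  push_cast
  rw [mul_div_cancel₀]
  exact_mod_cast hs.ne'

open Matrix in
/-- **Block-diagonal LCU.** Let `A = ∑_{i=k₁}^{k₂} |i⟩⟨i| ⊗ A_i` be a block-diagonal matrix of
size `k·2^N × k·2^N` with `k₁ ≤ k₂`, where each `A_i` is an `N`-qubit matrix with an
`(α_i, n_i, 0)`-block-encoding. Then there is an `(α, n, 0)`-block-encoding of `A` with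
`α = max_{i ∈ [k₁,k₂]} α_i` and `n = max_{i ∈ [k₁,k₂]} n_i + 1`. -/
theorem block_diagonal_lcu (N k : ℕ) (k₁ k₂ : Fin k) (hk : k₁ ≤ k₂)
    (A : Fin k → Matrix (Fin (2 ^ N)) (Fin (2 ^ N)) ℂ)
    (α : Fin k → ℝ) (hα : ∀ i, 0 ≤ α i) (n : Fin k → ℕ)
    (U : (i : Fin k) → Matrix (Fin (2 ^ N) × Fin (2 ^ n i)) (Fin (2 ^ N) × Fin (2 ^ n i)) ℂ)
    (hU : ∀ i, k₁ ≤ i → i ≤ k₂ → IsBlockEncoding (n i) (α i) (A i) (U i)) :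
    ∃ V : Matrix ((Fin k × Fin (2 ^ N)) × Fin (2 ^ ((Finset.Icc k₁ k₂).sup n + 1)))
        ((Fin k × Fin (2 ^ N)) × Fin (2 ^ ((Finset.Icc k₁ k₂).sup n + 1))) ℂ,
      IsBlockEncoding ((Finset.Icc k₁ k₂).sup n + 1)
        ((Finset.Icc k₁ k₂).sup' (Finset.nonempty_Icc.mpr hk) α)
        (Matrix.of fun p q : Fin k × Fin (2 ^ N) =>
          if p.1 = q.1 ∧ k₁ ≤ p.1 ∧ p.1 ≤ k₂ then A p.1 p.2 q.2 else 0) V := by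
  classical
  set m := (Finset.Icc k₁ k₂).sup n with hm
  set αs := (Finset.Icc k₁ k₂).sup' (Finset.nonempty_Icc.mpr hk) α with hαs
  set z0 : Fin (2^(m+1)) := ⟨0, Nat.two_pow_pos _⟩ with hz0
  have hαle : ∀ i : Fin k, k₁ ≤ i → i ≤ k₂ → α i ≤ αs := fun i h1 h2 =>
    Finset.le_sup' α (Finset.mem_Icc.mpr ⟨h1, h2⟩)
  have hαs0 : 0 ≤ αs := le_trans (hα k₁) (hαle k₁ le_rfl hk)
  rcases eq_or_lt_of_le hαs0 with h0 | hpos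
  · -- αs = 0 : the block-diagonal matrix is zero, take V = 1
    refine ⟨1, one_mem _, fun p q => ?_⟩
    rw [← h0]
    simp only [Complex.ofReal_zero, zero_mul, Matrix.of_apply]
    split_ifs with h
    · obtain ⟨h1, h2, h3⟩ := h
      have hz : α p.1 = 0 := le_antisymm (h0 ▸ hαle p.1 h2 h3) (hα p.1)
      rw [(hU p.1 h2 h3).2 p.2 q.2, hz]
      simp
    · rfl
  · -- main case
    have hW : ∀ i : Fin k, ∃ W : Matrix (Fin (2^N) × Fin (2^(m+1)))
        (Fin (2^N) × Fin (2^(m+1))) ℂ,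
        W ∈ Matrix.unitaryGroup _ ℂ ∧
        ((k₁ ≤ i ∧ i ≤ k₂) → ∀ x y, A i x y = (αs : ℂ) * W (x, z0) (y, z0)) ∧
        (¬(k₁ ≤ i ∧ i ≤ k₂) → ∀ x y, W (x, z0) (y, z0) = 0) := by
      intro i
      by_cases hi : k₁ ≤ i ∧ i ≤ k₂
      · have hni : n i ≤ m := Finset.le_sup (Finset.mem_Icc.mpr hi)
        obtain ⟨W, hWu, hWe⟩ := dilate hni (hα i) (hαle i hi.1 hi.2) hpos (A i) (U i)
          (hU i hi.1 hi.2)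
        exact ⟨W, hWu, fun _ x y => hWe x y, fun h => absurd hi h⟩
      · have h1 : (1 : Fin (2^(m+1))).val = 1 := by
          simp [Fin.val_one', Nat.mod_eq_of_lt (Nat.one_lt_two_pow m.succ_ne_zero)]
        refine ⟨Matrix.of fun a b : Fin (2^N) × Fin (2^(m+1)) =>
          if (Equiv.prodCongr (Equiv.refl (Fin (2^N))) (Equiv.addLeft 1)) b = a then (1:ℂ) else 0,
          permMat_unitary _, fun h => absurd h hi, fun _ x y => ?_⟩
        rw [Matrix.of_apply, if_neg]
        intro hcontr
        have : (1 + z0 : Fin (2^(m+1))) = z0 := congrArg Prod.snd hcontr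
        have : ((1 + z0 : Fin (2^(m+1))) : ℕ) = 0 := by rw [this]
        rw [Fin.val_add, h1] at this
        simp [hz0, Nat.mod_eq_of_lt (Nat.one_lt_two_pow m.succ_ne_zero)] at this
    choose W hWu hWin hWout using hW
    let Eb : ((Fin (2^N) × Fin (2^(m+1))) × Fin k) ≃
        ((Fin k × Fin (2^N)) × Fin (2^(m+1))) :=
      ⟨fun x => ((x.2, x.1.1), x.1.2), fun y => ((y.1.2, y.2), y.1.1),
        fun _ => rfl, fun _ => rfl⟩
    refine ⟨Matrix.reindex Eb Eb (Matrix.blockDiagonal W),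
      reindex_unitary _ _ (blockDiagonal_unitary _ hWu), fun p q => ?_⟩
    have hV : (Matrix.reindex Eb Eb (Matrix.blockDiagonal W)) (p, z0) (q, z0)
        = if p.1 = q.1 then W p.1 (p.2, z0) (q.2, z0) else 0 := by
      simp only [Matrix.reindex_apply, Matrix.submatrix_apply]
      rw [show Eb.symm (p, z0) = ((p.2, z0), p.1) from rfl,
        show Eb.symm (q, z0) = ((q.2, z0), q.1) from rfl]
      rw [Matrix.blockDiagonal_apply]
    rw [hV, Matrix.of_apply]
    by_cases hpq : p.1 = q.1
    · rw [if_pos hpq]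
      by_cases hin : k₁ ≤ p.1 ∧ p.1 ≤ k₂
      · rw [if_pos ⟨hpq, hin⟩, hpq]
        exact hWin q.1 (hpq ▸ hin) p.2 q.2
      · rw [if_neg (fun h => hin ⟨h.2.1, h.2.2⟩), hpq, hWout q.1 (hpq ▸ hin) p.2 q.2, mul_zero]
    · rw [if_neg hpq, if_neg (fun h => hpq h.1), mul_zero]
end

section
/- Let B be a square matrix and A_H = I \otimes I - \Delta \otimes B the block lower bidiagonal matrix with identity diagonal blocks and -B subdiagonal blocks, of block size T+1. If B admits a unit eigenvector \xi with eigenvalue e^{i\theta} for some real \theta, then \|A_H^{-1}\| \geq \sqrt{(2+T)(3+2T)/6} \geq T/\sqrt{3}. Consequently, if additionally \|A_H\| \geq \sqrt{1+\|B\|^2}, the condition number satisfies \kappa(A_H) = \|A_H\| \|A_H^{-1}\| \geq \|B\| T / \sqrt{3}. -/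
/-!
The lower shift `Δ` is nilpotent, hence so is `Δ ⊗ B`, and `A_H = 1 - Δ ⊗ B` is invertible.
If `B ξ = μ ξ` with `|μ| = 1`, then `A_H` maps `((t + 1) μ^t)_t ⊗ ξ` to `(μ^t)_t ⊗ ξ`, because
`(t + 1) μ^t - μ · t μ^(t-1) = μ^t`. Comparing norms, `‖A_H⁻¹‖² ≥ ∑_{t ≤ T} (t + 1)² / (T + 1)
= (T + 2)(2T + 3)/6`. Finally `‖B‖ ≤ √(1 + ‖B‖²) ≤ ‖A_H‖` gives the bound on `‖A_H‖ ‖A_H⁻¹‖`.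
-/

open Kronecker

/-- The spectral (operator) norm of a complex matrix. -/
noncomputable def opNorm {m n : Type*} [Fintype m] [Fintype n] [DecidableEq n]
    (M : Matrix m n ℂ) : ℝ :=
  ‖LinearMap.toContinuousLinearMap (Matrix.toEuclideanLin M)‖

namespace Matrix

variable {R : Type*}

def lowerShift [Zero R] [One R] (m : ℕ) : Matrix (Fin m) (Fin m) R :=
  of fun r c => if (r : ℕ) = c + 1 then 1 else 0

theorem lowerShift_mulVec_apply [Semiring R] {m : ℕ} (v : Fin m → R) (t : Fin m) :
    (lowerShift m *ᵥ v) t = if h : (t : ℕ) = 0 then 0 else v ⟨t - 1, by omega⟩ := by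
  simp only [mulVec, dotProduct, lowerShift, of_apply, ite_mul, one_mul, zero_mul]
  split_ifs with ht
  · exact Finset.sum_eq_zero fun j _ => if_neg (by omega)
  · have hj : ∀ j : Fin m, (t : ℕ) = j + 1 ↔ j = ⟨t - 1, by omega⟩ := fun j => by
      simp only [Fin.ext_iff]; omega
    simp only [hj, Finset.sum_ite_eq', Finset.mem_univ, if_true]

theorem lowerShift_pow_apply [Semiring R] {m : ℕ} (k : ℕ) (r c : Fin m) :
    (lowerShift m ^ k : Matrix (Fin m) (Fin m) R) r c = if (r : ℕ) = c + k then 1 else 0 := by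
  induction k generalizing r with
  | zero => simp [one_apply, Fin.ext_iff]
  | succ k ih =>
    rw [pow_succ', mul_apply', ← mulVec.eq_1, lowerShift_mulVec_apply]
    split_ifs <;> simp_all; omega

theorem lowerShift_pow_self [Semiring R] (m : ℕ) :
    (lowerShift m : Matrix (Fin m) (Fin m) R) ^ m = 0 := by
  ext r c
  rw [lowerShift_pow_apply, if_neg (by omega), zero_apply]

section Kronecker

variable [CommSemiring R] {l p : Type*} [Fintype l] [DecidableEq l] [Fintype p] [DecidableEq p]

theorem kronecker_pow (A : Matrix l l R) (B : Matrix p p R) (k : ℕ) :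
    (A ⊗ₖ B) ^ k = (A ^ k) ⊗ₖ (B ^ k) := by
  induction k with
  | zero => rw [pow_zero, pow_zero, pow_zero, one_kronecker_one]
  | succ k ih => rw [pow_succ, pow_succ, pow_succ, ih, mul_kronecker_mul]

theorem isNilpotent_kronecker_left {A : Matrix l l R} (hA : IsNilpotent A) (B : Matrix p p R) :
    IsNilpotent (A ⊗ₖ B) := by
  obtain ⟨k, hk⟩ := hA
  exact ⟨k, by rw [kronecker_pow, hk, zero_kronecker]⟩

omit [DecidableEq l] [DecidableEq p] in
theorem kronecker_mulVec_mul {m n : Type*} (A : Matrix m l R) (B : Matrix n p R) (f : l → R)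
    (v : p → R) :
    (A ⊗ₖ B) *ᵥ (fun q => f q.1 * v q.2) = fun q => (A *ᵥ f) q.1 * (B *ᵥ v) q.2 := by
  ext ⟨i, k⟩
  simp only [mulVec, dotProduct, kroneckerMap_apply, Fintype.sum_prod_type, Finset.sum_mul_sum]
  exact Finset.sum_congr rfl fun j _ => Finset.sum_congr rfl fun j' _ => by ring

end Kronecker

end Matrix

open Matrix

theorem one_sub_lowerShift_kronecker_mulVec {R ι : Type*} [CommRing R] [Fintype ι] [DecidableEq ι]
    {B : Matrix ι ι R} {μ : R} {ξ : ι → R} (heig : B *ᵥ ξ = μ • ξ) (m : ℕ) :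
    (1 - lowerShift m ⊗ₖ B) *ᵥ
        (fun q : Fin m × ι => ((q.1 : ℕ) + 1 : R) * μ ^ (q.1 : ℕ) * ξ q.2) =
      fun q => μ ^ (q.1 : ℕ) * ξ q.2 := by
  rw [sub_mulVec, one_mulVec,
    kronecker_mulVec_mul (f := fun t : Fin m => ((t : ℕ) + 1 : R) * μ ^ (t : ℕ)), heig]
  ext ⟨t, i⟩
  simp only [Pi.sub_apply, lowerShift_mulVec_apply, Pi.smul_apply, smul_eq_mul]
  split_ifs with ht
  · simp [ht]
  · obtain ⟨s, hs⟩ := Nat.exists_eq_add_one_of_ne_zero ht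
    simp only [hs, Nat.add_sub_cancel]
    push_cast
    ring

theorem sum_range_add_one_sq (m : ℕ) :
    ∑ t ∈ Finset.range m, ((t : ℝ) + 1) ^ 2 = (m : ℝ) * (m + 1) * (2 * m + 1) / 6 := by
  induction m with
  | zero => simp
  | succ k ih =>
    rw [Finset.sum_range_succ, ih]
    push_cast
    ring

theorem EuclideanSpace.norm_toLp_mul {𝕜 ι κ : Type*} [RCLike 𝕜] [Fintype ι] [Fintype κ]
    (f : ι → 𝕜) (v : κ → 𝕜) :
    ‖WithLp.toLp 2 (fun q : ι × κ => f q.1 * v q.2)‖ = ‖WithLp.toLp 2 f‖ * ‖WithLp.toLp 2 v‖ := by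
  rw [← sq_eq_sq₀ (norm_nonneg _) (by positivity), mul_pow]
  simp only [EuclideanSpace.norm_sq_eq, Fintype.sum_prod_type, Finset.sum_mul_sum, norm_mul,
    mul_pow]

theorem norm_toLp_pow {μ : ℂ} (hμ : ‖μ‖ = 1) (m : ℕ) :
    ‖WithLp.toLp 2 (fun t : Fin m => μ ^ (t : ℕ))‖ = √m := by
  simp [EuclideanSpace.norm_eq, hμ]

theorem norm_toLp_add_one_mul_pow {μ : ℂ} (hμ : ‖μ‖ = 1) (m : ℕ) :
    ‖WithLp.toLp 2 (fun t : Fin m => ((t : ℕ) + 1 : ℂ) * μ ^ (t : ℕ))‖ =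
      √(m * (m + 1) * (2 * m + 1) / 6) := by
  rw [EuclideanSpace.norm_eq, ← sum_range_add_one_sq, ← Fin.sum_univ_eq_sum_range]
  congr 1
  refine Finset.sum_congr rfl fun t _ => ?_
  simp [hμ, ← Nat.cast_add_one, -Nat.cast_add]

theorem norm_toLp_mulVec_le {m n : Type*} [Fintype m] [Fintype n] [DecidableEq n]
    (M : Matrix m n ℂ) (x : n → ℂ) :
    ‖WithLp.toLp 2 (M *ᵥ x)‖ ≤ opNorm M * ‖WithLp.toLp 2 x‖ :=
  (LinearMap.toContinuousLinearMap (toEuclideanLin M)).le_opNorm _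

theorem isUnit_det_one_sub_lowerShift_kronecker {R ι : Type*} [CommRing R] [Fintype ι]
    [DecidableEq ι] {m : ℕ} (B : Matrix ι ι R) : IsUnit (1 - lowerShift m ⊗ₖ B).det :=
  (isUnit_iff_isUnit_det _).mp
    (isNilpotent_kronecker_left ⟨m, lowerShift_pow_self m⟩ B).isUnit_one_sub

theorem sqrt_le_opNorm_inv_one_sub_lowerShift_kronecker {ι : Type*} [Fintype ι] [DecidableEq ι]
    (T : ℕ) {B : Matrix ι ι ℂ} {μ : ℂ} (hμ : ‖μ‖ = 1) {ξ : ι → ℂ} (hξ : ξ ≠ 0)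
    (heig : B *ᵥ ξ = μ • ξ) :
    √((2 + T) * (3 + 2 * T) / 6) ≤ opNorm (1 - lowerShift (T + 1) ⊗ₖ B)⁻¹ := by
  set A := 1 - lowerShift (T + 1) ⊗ₖ B
  have hsolve : A⁻¹ *ᵥ (fun q : Fin (T + 1) × ι => μ ^ (q.1 : ℕ) * ξ q.2) =
      fun q => ((q.1 : ℕ) + 1 : ℂ) * μ ^ (q.1 : ℕ) * ξ q.2 := by
    rw [← one_sub_lowerShift_kronecker_mulVec heig, mulVec_mulVec,
      nonsing_inv_mul A (isUnit_det_one_sub_lowerShift_kronecker B), one_mulVec]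
  have key := norm_toLp_mulVec_le A⁻¹ fun q : Fin (T + 1) × ι => μ ^ (q.1 : ℕ) * ξ q.2
  have hξ_pos : 0 < ‖WithLp.toLp 2 ξ‖ := norm_pos_iff.mpr ((WithLp.toLp_eq_zero 2).not.mpr hξ)
  rw [hsolve,
    EuclideanSpace.norm_toLp_mul (fun t : Fin (T + 1) => ((t : ℕ) + 1 : ℂ) * μ ^ (t : ℕ)),
    EuclideanSpace.norm_toLp_mul (fun t : Fin (T + 1) => μ ^ (t : ℕ)), norm_toLp_pow hμ,
    norm_toLp_add_one_mul_pow hμ, ← mul_assoc, mul_le_mul_iff_left₀ hξ_pos] at key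
  rw [show ((T + 1 : ℕ) : ℝ) * ((T + 1 : ℕ) + 1) * (2 * (T + 1 : ℕ) + 1) / 6 =
      (T + 1 : ℕ) * ((2 + T) * (3 + 2 * T) / 6) by push_cast; ring,
    Real.sqrt_mul (Nat.cast_nonneg _), mul_comm] at key
  exact le_of_mul_le_mul_right key (Real.sqrt_pos.mpr (by positivity))

theorem div_sqrt_three_le_sqrt {x : ℝ} (hx : 0 ≤ x) :
    x / √3 ≤ √((2 + x) * (3 + 2 * x) / 6) := by
  refine Real.le_sqrt_of_sq_le ?_
  rw [div_pow, Real.sq_sqrt zero_le_three]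
  nlinarith

/-- **Lower bound on the condition number of `A_H`.** Let `A_H = I ⊗ I - Δ ⊗ B` with `Δ` the
lower shift on `ℂ^(T+1)`. If `B` has a unit eigenvector `ξ` with eigenvalue `e^{iθ}`, then
`‖A_H⁻¹‖ ≥ √((2+T)(3+2T)/6) ≥ T/√3`, and if moreover `‖A_H‖ ≥ √(1+‖B‖²)` then
`κ(A_H) = ‖A_H‖·‖A_H⁻¹‖ ≥ ‖B‖·T/√3`. -/
theorem condition_number_lower_bound (n T : ℕ) (B : Matrix (Fin n) (Fin n) ℂ)
    (Δ : Matrix (Fin (T + 1)) (Fin (T + 1)) ℂ)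
    (hΔ : Δ = Matrix.of fun r c : Fin (T + 1) => if (r : ℕ) = (c : ℕ) + 1 then (1 : ℂ) else 0)
    (AH : Matrix (Fin (T + 1) × Fin n) (Fin (T + 1) × Fin n) ℂ)
    (hAH : AH = 1 - Δ ⊗ₖ B)
    (θ : ℝ) (ξ : Fin n → ℂ) (hξ : ∑ i, ‖ξ i‖ ^ 2 = 1)
    (heig : B.mulVec ξ = Complex.exp (θ * Complex.I) • ξ) :
    Real.sqrt ((2 + T) * (3 + 2 * T) / 6) ≤ opNorm AH⁻¹ ∧
      (T : ℝ) / Real.sqrt 3 ≤ Real.sqrt ((2 + T) * (3 + 2 * T) / 6) ∧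
      (Real.sqrt (1 + opNorm B ^ 2) ≤ opNorm AH →
        opNorm B * T / Real.sqrt 3 ≤ opNorm AH * opNorm AH⁻¹) := by
  subst hΔ hAH
  have hξ_ne : ξ ≠ 0 := by
    rintro rfl
    simp at hξ
  have hμ : ‖Complex.exp (θ * Complex.I)‖ = 1 := Complex.norm_exp_ofReal_mul_I θ
  have hinv := sqrt_le_opNorm_inv_one_sub_lowerShift_kronecker T hμ hξ_ne heig
  have hT := div_sqrt_three_le_sqrt (Nat.cast_nonneg (α := ℝ) T)
  refine ⟨hinv, hT, fun hA => ?_⟩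
  have hB : opNorm B ≤ opNorm (1 - lowerShift (T + 1) ⊗ₖ B) :=
    (Real.le_sqrt_of_sq_le (le_add_of_nonneg_left zero_le_one)).trans hA
  rw [mul_div_assoc]
  exact mul_le_mul hB (hT.trans hinv) (by positivity) ((norm_nonneg _).trans hB)
end

section
/- Let F_1 be a square matrix whose only eigenvalues are 0 and -1/\tau for some \tau > 0, diagonalizable as V^{-1} F_1 V = -(1/\tau)\Pi_- with \Pi_- a projector, and let F_2, F_3 be rectangular matrices satisfying the algebraic relations F_1 F_2 = -F_2, F_1 F_3 = -F_3, F_2(F_1 \otimes I) = F_2(I \otimes F_1) = 0, F_3(F_1 \otimes I^{\otimes 2}) = F_3(I \otimes F_1 \otimes I) = F_3(I^{\otimes 2} \otimes F_1) = 0, F_2(F_2 \otimes I) = F_2(I \otimes F_2) = 0, F_2(F_3 \otimes I) = F_2(I \otimes F_3) = 0. Then the function f(t) = e^{F_1 t} f(0) + (1 - e^{-t})[F_2 f(0)^{\otimes 2} + F_3 f(0)^{\otimes 3}] solves the ODE df/dt = F_1 f + F_2 f^{\otimes 2} + F_3 f^{\otimes 3}. -/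
/-!
Write `g = F₂ f(0)^{⊗2} + F₃ f(0)^{⊗3}`, so that `F₁ g = -g`. Since
`e^{tF₁} - 1 = F₁ ∑ tⁿ⁺¹ F₁ⁿ / (n+1)!`, the difference `f(t) - f(0)` lies in the range of `F₁`,
and `F₂`, `F₃` annihilate every tensor having a factor in that range. Hence the quadratic and cubic
terms keep their values at `t = 0`, and the right-hand side of the equation is
`F₁ e^{tF₁} f(0) - (1 - e^{-t}) g + g = F₁ e^{tF₁} f(0) + e^{-t} g = f'(t)`.
-/

open Kronecker NormedSpace
open scoped Matrix Nat

section ExpSeries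

variable {𝕂 𝔸 : Type*} [RCLike 𝕂] [NormedRing 𝔸] [NormedAlgebra 𝕂 𝔸] [CompleteSpace 𝔸]

theorem summable_inv_factorial_succ_smul_pow (a : 𝔸) :
    Summable fun n : ℕ => ((n + 1)! : 𝕂)⁻¹ • a ^ n := by
  refine .of_norm_bounded (norm_expSeries_summable' (𝕂 := 𝕂) a) fun n => ?_
  rw [norm_smul, norm_smul, norm_inv, norm_inv, RCLike.norm_natCast, RCLike.norm_natCast]
  gcongr
  exact n.le_succ

variable (𝕂) in
theorem NormedSpace.exp_eq_one_add_mul_tsum (a : 𝔸) :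
    exp a = 1 + a * ∑' n : ℕ, ((n + 1)! : 𝕂)⁻¹ • a ^ n := by
  rw [congrFun (exp_eq_tsum 𝕂) a, (expSeries_summable' a).tsum_eq_zero_add,
    ← (summable_inv_factorial_succ_smul_pow a).tsum_mul_left]
  simp only [Nat.factorial_zero, Nat.cast_one, inv_one, pow_zero, one_smul, pow_succ',
    mul_smul_comm]

end ExpSeries

namespace Matrix

section Exp

attribute [local instance] Matrix.linftyOpNormedRing Matrix.linftyOpNormedAlgebra

variable {n 𝕂 : Type*} [Fintype n] [DecidableEq n] [RCLike 𝕂]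

theorem exists_exp_smul_mulVec_eq_add_mulVec (A : Matrix n n 𝕂) (c : 𝕂) (v : n → 𝕂) :
    ∃ w, exp (c • A) *ᵥ v = v + A *ᵥ w :=
  ⟨_, by
    -- `erw`: the two `exp`s find the topology on matrices through different (defeq) instances.
    erw [exp_eq_one_add_mul_tsum 𝕂]
    rw [add_mulVec, one_mulVec, smul_mul_assoc, ← mul_smul_comm, ← mulVec_mulVec]⟩

theorem exists_exp_smul_mulVec_add_smul_eq_add_mulVec {A : Matrix n n 𝕂} {g : n → 𝕂}
    (hg : A *ᵥ g = -g) (v : n → 𝕂) (c d : 𝕂) :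
    ∃ w, exp (c • A) *ᵥ v + d • g = v + A *ᵥ w := by
  obtain ⟨w, hw⟩ := exists_exp_smul_mulVec_eq_add_mulVec A c v
  refine ⟨w - d • g, ?_⟩
  rw [hw, mulVec_sub, mulVec_smul, hg, smul_neg, sub_neg_eq_add, add_assoc]

theorem hasDerivAt_exp_smul_mulVec (A : Matrix n n ℂ) (v : n → ℂ) (t : ℝ) :
    HasDerivAt (fun s : ℝ => exp ((s : ℂ) • A) *ᵥ v) (A *ᵥ (exp ((t : ℂ) • A) *ᵥ v)) t := by
  let L : Matrix n n ℂ →L[ℝ] n → ℂ := LinearMap.toContinuousLinearMap ((mulVecBilin ℝ ℝ).flip v)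
  have h := L.hasFDerivAt.comp_hasDerivAt t (hasDerivAt_exp_smul_const' (𝕂 := ℝ) A t)
  simp only [Function.comp_def, L, LinearMap.coe_toContinuousLinearMap', LinearMap.flip_apply,
    mulVecBilin_apply, ← Complex.coe_smul] at h
  exact h.congr_deriv (mulVec_mulVec _ _ _).symm

theorem hasDerivAt_exp_smul_mulVec_add_smul {A : Matrix n n ℂ} {g : n → ℂ} (hg : A *ᵥ g = -g)
    (v : n → ℂ) (t : ℝ) :
    HasDerivAt (fun s : ℝ => exp ((s : ℂ) • A) *ᵥ v + ((1 - Real.exp (-s) : ℝ) : ℂ) • g)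
      (A *ᵥ (exp ((t : ℂ) • A) *ᵥ v + ((1 - Real.exp (-t) : ℝ) : ℂ) • g) + g) t := by
  have hscalar : HasDerivAt (fun s : ℝ => ((1 - Real.exp (-s) : ℝ) : ℂ))
      ((Real.exp (-t) : ℝ) : ℂ) t :=
    ((hasDerivAt_neg t).exp.const_sub 1).ofReal_comp.congr_deriv (by simp)
  refine ((hasDerivAt_exp_smul_mulVec A v t).add (hscalar.smul_const g)).congr_deriv ?_
  rw [mulVec_add, mulVec_smul, hg]
  push_cast
  module

end Exp

section VecKron

variable {R : Type*} [CommSemiring R] {l m n o : Type*}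

def vecKron (v : m → R) (w : n → R) : m × n → R := fun i => v i.1 * w i.2

theorem vecKron_add_left (v v' : m → R) (w : n → R) :
    vecKron (v + v') w = vecKron v w + vecKron v' w := by
  ext; simp [vecKron, add_mul]

theorem vecKron_add_right (v : m → R) (w w' : n → R) :
    vecKron v (w + w') = vecKron v w + vecKron v w' := by
  ext; simp [vecKron, mul_add]

theorem vecKron_vecKron (u : m → R) (v : n → R) (w : o → R) :
    vecKron u (vecKron v w) = fun i => u i.1 * v i.2.1 * w i.2.2 := by
  ext; simp [vecKron, mul_assoc]

theorem kronecker_mulVec_vecKron [Fintype m] [Fintype o] (A : Matrix l m R) (B : Matrix n o R)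
    (v : m → R) (w : o → R) : (A ⊗ₖ B) *ᵥ vecKron v w = vecKron (A *ᵥ v) (B *ᵥ w) := by
  ext ⟨i, k⟩
  simp only [vecKron, mulVec, dotProduct, kroneckerMap_apply, Fintype.sum_prod_type,
    Finset.sum_mul_sum]
  exact Finset.sum_congr rfl fun _ _ => Finset.sum_congr rfl fun _ _ => by ring

variable [Fintype m] [Fintype n]

theorem vecKron_add_mulVec_left [DecidableEq n] (A : Matrix m m R) (v w : m → R) (u : n → R) :
    vecKron (v + A *ᵥ w) u = vecKron v u + (A ⊗ₖ (1 : Matrix n n R)) *ᵥ vecKron w u := by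
  rw [kronecker_mulVec_vecKron, one_mulVec, vecKron_add_left]

theorem vecKron_add_mulVec_right [DecidableEq m] (A : Matrix n n R) (u : m → R) (v w : n → R) :
    vecKron u (v + A *ᵥ w) = vecKron u v + ((1 : Matrix m m R) ⊗ₖ A) *ᵥ vecKron u w := by
  rw [kronecker_mulVec_vecKron, one_mulVec, vecKron_add_right]

theorem mulVec_vecKron_add_mulVec_left [DecidableEq n] {F : Matrix l (m × n) R}
    {A : Matrix m m R} (hF : F * (A ⊗ₖ (1 : Matrix n n R)) = 0) (v w : m → R) (u : n → R) :
    F *ᵥ vecKron (v + A *ᵥ w) u = F *ᵥ vecKron v u := by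
  rw [vecKron_add_mulVec_left, mulVec_add, mulVec_mulVec, hF, zero_mulVec, add_zero]

theorem mulVec_vecKron_add_mulVec_right [DecidableEq m] {F : Matrix l (m × n) R}
    {A : Matrix n n R} (hF : F * ((1 : Matrix m m R) ⊗ₖ A) = 0) (u : m → R) (v w : n → R) :
    F *ᵥ vecKron u (v + A *ᵥ w) = F *ᵥ vecKron u v := by
  rw [vecKron_add_mulVec_right, mulVec_add, mulVec_mulVec, hF, zero_mulVec, add_zero]

variable [DecidableEq m] {A : Matrix m m R}

theorem mulVec_vecKron_self_add_mulVec {F : Matrix l (m × m) R}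
    (h₁ : F * (A ⊗ₖ (1 : Matrix m m R)) = 0) (h₂ : F * ((1 : Matrix m m R) ⊗ₖ A) = 0)
    (v w : m → R) :
    F *ᵥ vecKron (v + A *ᵥ w) (v + A *ᵥ w) = F *ᵥ vecKron v v := by
  rw [mulVec_vecKron_add_mulVec_left h₁, mulVec_vecKron_add_mulVec_right h₂]

theorem mulVec_vecKron_vecKron_self_add_mulVec {F : Matrix l (m × m × m) R}
    (h₁ : F * (A ⊗ₖ (1 : Matrix (m × m) (m × m) R)) = 0)
    (h₂ : F * ((1 : Matrix m m R) ⊗ₖ (A ⊗ₖ (1 : Matrix m m R))) = 0)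
    (h₃ : F * ((1 : Matrix m m R) ⊗ₖ ((1 : Matrix m m R) ⊗ₖ A)) = 0) (v w : m → R) :
    F *ᵥ vecKron (v + A *ᵥ w) (vecKron (v + A *ᵥ w) (v + A *ᵥ w))
      = F *ᵥ vecKron v (vecKron v v) := by
  rw [mulVec_vecKron_add_mulVec_left h₁, vecKron_add_mulVec_left,
    mulVec_vecKron_add_mulVec_right h₂, vecKron_add_mulVec_right,
    mulVec_vecKron_add_mulVec_right h₃]

end VecKron

end Matrix

theorem purely_collisional_solution_general
    (Q : ℕ)
    (F₁ : Matrix (Fin Q) (Fin Q) ℂ)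
    (F₂ : Matrix (Fin Q) (Fin Q × Fin Q) ℂ)
    (F₃ : Matrix (Fin Q) (Fin Q × Fin Q × Fin Q) ℂ)
    (h12 : F₁ * F₂ = -F₂)
    (h13 : F₁ * F₃ = -F₃)
    (h21 : F₂ * (F₁ ⊗ₖ (1 : Matrix (Fin Q) (Fin Q) ℂ)) = 0)
    (h21' : F₂ * ((1 : Matrix (Fin Q) (Fin Q) ℂ) ⊗ₖ F₁) = 0)
    (h31 : F₃ * (F₁ ⊗ₖ (1 : Matrix (Fin Q × Fin Q) (Fin Q × Fin Q) ℂ)) = 0)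
    (h31' : F₃ * ((1 : Matrix (Fin Q) (Fin Q) ℂ) ⊗ₖ (F₁ ⊗ₖ (1 : Matrix (Fin Q) (Fin Q) ℂ))) = 0)
    (h31'' : F₃ * ((1 : Matrix (Fin Q) (Fin Q) ℂ) ⊗ₖ ((1 : Matrix (Fin Q) (Fin Q) ℂ) ⊗ₖ F₁)) = 0)
    (f0 : Fin Q → ℂ) (f : ℝ → Fin Q → ℂ)
    (hf : f = fun t : ℝ =>
      (NormedSpace.exp ((t : ℂ) • F₁)).mulVec f0
        + ((1 - Real.exp (-t) : ℝ) : ℂ) •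
            (F₂.mulVec (fun p => f0 p.1 * f0 p.2)
              + F₃.mulVec (fun p => f0 p.1 * f0 p.2.1 * f0 p.2.2))) :
    ∀ t : ℝ, HasDerivAt f
      (F₁.mulVec (f t) + F₂.mulVec (fun p => f t p.1 * f t p.2)
        + F₃.mulVec (fun p => f t p.1 * f t p.2.1 * f t p.2.2)) t := by
  intro t
  set g := F₂ *ᵥ Matrix.vecKron f0 f0 + F₃ *ᵥ Matrix.vecKron f0 (Matrix.vecKron f0 f0) with hg
  have hF₁g : F₁ *ᵥ g = -g := by
    rw [hg, Matrix.mulVec_add, Matrix.mulVec_mulVec, Matrix.mulVec_mulVec, h12, h13,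
      Matrix.neg_mulVec, Matrix.neg_mulVec, neg_add]
  have hf' : f = fun s : ℝ => exp ((s : ℂ) • F₁) *ᵥ f0 + ((1 - Real.exp (-s) : ℝ) : ℂ) • g := by
    rw [hf, ← Matrix.vecKron_vecKron]; rfl
  obtain ⟨w, hw⟩ : ∃ w, f t = f0 + F₁ *ᵥ w := by
    rw [hf']
    exact Matrix.exists_exp_smul_mulVec_add_smul_eq_add_mulVec hF₁g f0 _ _
  have hquad : F₂ *ᵥ (fun p => f t p.1 * f t p.2) = F₂ *ᵥ Matrix.vecKron f0 f0 := by
    rw [hw]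
    exact Matrix.mulVec_vecKron_self_add_mulVec h21 h21' f0 w
  have hcube : F₃ *ᵥ (fun p => f t p.1 * f t p.2.1 * f t p.2.2)
      = F₃ *ᵥ Matrix.vecKron f0 (Matrix.vecKron f0 f0) := by
    rw [hw, ← Matrix.vecKron_vecKron]
    exact Matrix.mulVec_vecKron_vecKron_self_add_mulVec h31 h31' h31'' f0 w
  rw [hquad, hcube, add_assoc, ← hg, hf']
  exact Matrix.hasDerivAt_exp_smul_mulVec_add_smul hF₁g f0 t

/-- **Explicit solution of the purely collisional discrete Boltzmann equation.**
Let `F₁` be a `Q×Q` matrix whose only eigenvalues are `0` and `-1/τ` (`τ > 0`),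
diagonalizable as `V⁻¹ F₁ V = -(1/τ)·Π₋` with `Π₋` a projector, and let `F₂ : Q×Q²`,
`F₃ : Q×Q³` satisfy `F₁F₂ = -F₂`, `F₁F₃ = -F₃`, `F₂(F₁⊗I) = F₂(I⊗F₁) = 0`,
`F₃(F₁⊗I⊗I) = F₃(I⊗F₁⊗I) = F₃(I⊗I⊗F₁) = 0`, `F₂(F₂⊗I) = F₂(I⊗F₂) = 0`,
`F₂(F₃⊗I) = F₂(I⊗F₃) = 0`. Then
`f(t) = e^{F₁t} f(0) + (1 - e^{-t})[F₂ f(0)^{⊗2} + F₃ f(0)^{⊗3}]`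
solves the ODE `df/dt = F₁ f + F₂ f^{⊗2} + F₃ f^{⊗3}`. -/
theorem purely_collisional_solution
    (Q : ℕ) (τ : ℝ) (hτ : 0 < τ)
    (F₁ : Matrix (Fin Q) (Fin Q) ℂ)
    (F₂ : Matrix (Fin Q) (Fin Q × Fin Q) ℂ)
    (F₃ : Matrix (Fin Q) (Fin Q × Fin Q × Fin Q) ℂ)
    (V : Matrix (Fin Q) (Fin Q) ℂ) (hV : IsUnit V)
    (P : Matrix (Fin Q) (Fin Q) ℂ) (hP : P * P = P)
    (hdiag : V⁻¹ * F₁ * V = -((1 / τ : ℂ) • P))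
    (h12 : F₁ * F₂ = -F₂)
    (h13 : F₁ * F₃ = -F₃)
    (h21 : F₂ * (F₁ ⊗ₖ (1 : Matrix (Fin Q) (Fin Q) ℂ)) = 0)
    (h21' : F₂ * ((1 : Matrix (Fin Q) (Fin Q) ℂ) ⊗ₖ F₁) = 0)
    (h31 : F₃ * (F₁ ⊗ₖ (1 : Matrix (Fin Q × Fin Q) (Fin Q × Fin Q) ℂ)) = 0)
    (h31' : F₃ * ((1 : Matrix (Fin Q) (Fin Q) ℂ) ⊗ₖ (F₁ ⊗ₖ (1 : Matrix (Fin Q) (Fin Q) ℂ))) = 0)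
    (h31'' : F₃ * ((1 : Matrix (Fin Q) (Fin Q) ℂ) ⊗ₖ ((1 : Matrix (Fin Q) (Fin Q) ℂ) ⊗ₖ F₁)) = 0)
    (h22 : F₂ * (F₂ ⊗ₖ (1 : Matrix (Fin Q) (Fin Q) ℂ)) = 0)
    (h22' : F₂ * ((1 : Matrix (Fin Q) (Fin Q) ℂ) ⊗ₖ F₂) = 0)
    (h23 : F₂ * (F₃ ⊗ₖ (1 : Matrix (Fin Q) (Fin Q) ℂ)) = 0)
    (h23' : F₂ * ((1 : Matrix (Fin Q) (Fin Q) ℂ) ⊗ₖ F₃) = 0)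
    (f0 : Fin Q → ℂ) (f : ℝ → Fin Q → ℂ)
    (hf : f = fun t : ℝ =>
      (NormedSpace.exp ((t : ℂ) • F₁)).mulVec f0
        + ((1 - Real.exp (-t) : ℝ) : ℂ) •
            (F₂.mulVec (fun p => f0 p.1 * f0 p.2)
              + F₃.mulVec (fun p => f0 p.1 * f0 p.2.1 * f0 p.2.2))) :
    ∀ t : ℝ, HasDerivAt f
      (F₁.mulVec (f t) + F₂.mulVec (fun p => f t p.1 * f t p.2)
        + F₃.mulVec (fun p => f t p.1 * f t p.2.1 * f t p.2.2)) t :=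
  purely_collisional_solution_general Q F₁ F₂ F₃ h12 h13 h21 h21' h31 h31' h31'' f0 f hf
end

section
/- Under the hypotheses of the purely collisional solution (algebraic relations among F_1, F_2, F_3 as above), the Carleman-truncated linear system at truncation order N_C \geq 3 reproduces the nonlinear dynamics exactly: if y_k(0) = f(0)^{\otimes k} for k = 1, ..., N_C and the y_k evolve by the truncated Carleman linear ODE (where dy_k/dt = F_1^{(k)} y_k + F_2^{(k)} y_{k+1} + F_3^{(k)} y_{k+2} with terms beyond index N_C dropped), then y_1(t) = f(t) for all t \geq 0, where f solves the nonlinear ODE df/dt = F_1 f + F_2 f^{\otimes 2} + F_3 f^{\otimes 3}. -/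
open Kronecker

/-- The Carleman lift `F₁^{(k)} = ∑_{j=0}^{k-1} I^{⊗j} ⊗ F₁ ⊗ I^{⊗(k-j-1)}` of a `Q×Q`
matrix to the `k`-fold tensor power. -/
noncomputable def F1lift {Q : ℕ} (F₁ : Matrix (Fin Q) (Fin Q) ℂ) (k : ℕ) :
    Matrix (Fin k → Fin Q) (Fin k → Fin Q) ℂ :=
  Matrix.of fun a b =>
    ∑ j : Fin k, F₁ (a j) (b j) *
      ∏ i ∈ Finset.univ.erase j, (if a i = b i then (1 : ℂ) else 0)

/-- The Carleman lift `F₂^{(k)} = ∑_{j=0}^{k-1} I^{⊗j} ⊗ F₂ ⊗ I^{⊗(k-j-1)}` of a `Q×Q²`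
matrix, mapping the `(k+1)`-fold tensor power to the `k`-fold one. -/
noncomputable def F2lift {Q : ℕ} (F₂ : Matrix (Fin Q) (Fin Q × Fin Q) ℂ) (k : ℕ) :
    Matrix (Fin k → Fin Q) (Fin (k + 1) → Fin Q) ℂ :=
  Matrix.of fun a b =>
    ∑ j : Fin k, F₂ (a j) (b j.castSucc, b j.succ) *
      ∏ i ∈ Finset.univ.erase j,
        (if (i : ℕ) < (j : ℕ) then (if a i = b i.castSucc then (1 : ℂ) else 0)
          else (if a i = b i.succ then (1 : ℂ) else 0))

/-- The Carleman lift `F₃^{(k)} = ∑_{j=0}^{k-1} I^{⊗j} ⊗ F₃ ⊗ I^{⊗(k-j-1)}` of a `Q×Q³`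
matrix, mapping the `(k+2)`-fold tensor power to the `k`-fold one. -/
noncomputable def F3lift {Q : ℕ} (F₃ : Matrix (Fin Q) (Fin Q × Fin Q × Fin Q) ℂ) (k : ℕ) :
    Matrix (Fin k → Fin Q) (Fin (k + 2) → Fin Q) ℂ :=
  Matrix.of fun a b =>
    ∑ j : Fin k, F₃ (a j) (b j.castSucc.castSucc, b j.succ.castSucc, b j.succ.succ) *
      ∏ i ∈ Finset.univ.erase j,
        (if (i : ℕ) < (j : ℕ) then (if a i = b i.castSucc.castSucc then (1 : ℂ) else 0)
          else (if a i = b i.succ.succ then (1 : ℂ) else 0))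

/-!
Differentiating the relations `F_l (e^{x F₁} ⊗ I) = F_l` at `x = 0` shows that `F₂` and `F₃`
annihilate `F₁` placed in any tensor slot; `F₃ (I ⊗ F₂ ⊗ I) = 0`, the one slot the hypotheses
do not list, follows from `F₂ = F₁ (-F₂)`. So `F₂` and `F₃` kill one-slot insertions of each of
`F₁, F₂, F₃`, and in coordinates this is `F₂^{(1)} F_l^{(2)} = F₃^{(1)} F_l^{(3)} = 0`.

Consequently `F₂^{(1)} y₂ + F₃^{(1)} y₃` is constant along the truncated system (whatever the
truncation does at levels `≥ 4`), and the collision term `F₂ f^{⊗2} + F₃ f^{⊗3}` is constant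
along the nonlinear flow. The two constants agree at `t = 0`, so `y₁` and `f` solve the same
affine equation `u' = F₁ u + c` with the same initial value.
-/

open Matrix

section ExpDerivative

attribute [local instance] Matrix.linftyOpNormedRing Matrix.linftyOpNormedAlgebra
  Matrix.linftyOpNormedAddCommGroup Matrix.linftyOpNormedSpace

variable {l m n : Type*} [Fintype l] [Fintype m] [Fintype n] [DecidableEq n]

theorem Matrix.map_eq_zero_of_map_exp_smul_eq_const {E : Type*} [NormedAddCommGroup E]
    [NormedSpace ℂ E] (A : Matrix n n ℂ) (L : Matrix n n ℂ →ₗ[ℂ] E) {c : E}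
    (h : ∀ x : ℝ, L (NormedSpace.exp ((x : ℂ) • A)) = c) : L A = 0 := by
  have hexp : HasDerivAt (fun x : ℝ => NormedSpace.exp ((x : ℂ) • A)) A 0 := by
    have hcoe : HasDerivAt (fun x : ℝ => (x : ℂ)) 1 0 := by
      simpa using (hasDerivAt_id (0 : ℝ)).ofReal_comp
    have h := (hasDerivAt_exp_smul_const (𝕂 := ℂ) A ((0 : ℝ) : ℂ)).scomp (0 : ℝ) hcoe
    simp only [Function.comp_def, Complex.coe_smul, Complex.ofReal_zero, zero_smul,
      NormedSpace.exp_zero, one_mul, one_smul] at h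
    exact h
  have hL := ((LinearMap.toContinuousLinearMap L).restrictScalars ℝ).hasFDerivAt.comp_hasDerivAt
    (0 : ℝ) hexp
  simp only [Function.comp_def, ContinuousLinearMap.coe_restrictScalars',
    LinearMap.coe_toContinuousLinearMap', h] at hL
  exact hL.unique (hasDerivAt_const (0 : ℝ) c)

theorem Matrix.mul_map_eq_zero_of_mul_map_exp_eq (A : Matrix n n ℂ)
    (Φ : Matrix n n ℂ →ₗ[ℂ] Matrix m m ℂ) (G : Matrix l m ℂ)
    (h : ∀ x : ℝ, G * Φ (NormedSpace.exp ((x : ℂ) • A)) = G) : G * Φ A = 0 :=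
  map_eq_zero_of_map_exp_smul_eq_const A (mulLeftLinearMap m ℂ G ∘ₗ Φ) h

end ExpDerivative

section KroneckerVector

variable {R l m n p : Type*} [CommSemiring R]

def kronVec (u : m → R) (v : n → R) : m × n → R := fun q => u q.1 * v q.2

infixr:75 " ⊗ᵥ " => kronVec

@[simp]
theorem kronVec_apply (u : m → R) (v : n → R) (q : m × n) : (u ⊗ᵥ v) q = u q.1 * v q.2 := rfl

@[simp]
theorem add_kronVec (u u' : m → R) (v : n → R) : (u + u') ⊗ᵥ v = u ⊗ᵥ v + u' ⊗ᵥ v := by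
  ext q
  simp [add_mul]

@[simp]
theorem kronVec_add (u : m → R) (v v' : n → R) : u ⊗ᵥ (v + v') = u ⊗ᵥ v + u ⊗ᵥ v' := by
  ext q
  simp [mul_add]

theorem kronecker_mulVec_kronVec [Fintype m] [Fintype p] (A : Matrix l m R) (B : Matrix n p R)
    (u : m → R) (v : p → R) : (A ⊗ₖ B) *ᵥ (u ⊗ᵥ v) = (A *ᵥ u) ⊗ᵥ (B *ᵥ v) := by
  ext q
  simp only [mulVec, dotProduct, kronVec_apply, kroneckerMap_apply, Fintype.sum_prod_type,
    Finset.sum_mul_sum]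
  exact Finset.sum_congr rfl fun i _ => Finset.sum_congr rfl fun j _ => by ring

theorem mulVec_kronVec_eq_zero [Fintype m] [Fintype n] {o : Type*} [Fintype o] {q : Type*}
    [Fintype q] {G : Matrix l (m × n) R} {A : Matrix m o R} {B : Matrix n q R}
    (h : G * (A ⊗ₖ B) = 0) (u : o → R) (v : q → R) : G *ᵥ ((A *ᵥ u) ⊗ᵥ (B *ᵥ v)) = 0 := by
  rw [← kronecker_mulVec_kronVec, mulVec_mulVec, h, zero_mulVec]

variable [Fintype m] [DecidableEq m] [Fintype n]

def Annihilates₂ (G : Matrix l (m × m) R) (X : Matrix m n R) : Prop :=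
  G * (X ⊗ₖ (1 : Matrix m m R)) = 0 ∧ G * ((1 : Matrix m m R) ⊗ₖ X) = 0

def Annihilates₃ (G : Matrix l (m × m × m) R) (X : Matrix m n R) : Prop :=
  G * (X ⊗ₖ (1 : Matrix (m × m) (m × m) R)) = 0 ∧
    G * ((1 : Matrix m m R) ⊗ₖ (X ⊗ₖ (1 : Matrix m m R))) = 0 ∧
    G * ((1 : Matrix m m R) ⊗ₖ ((1 : Matrix m m R) ⊗ₖ X)) = 0

theorem Annihilates₂.mulVec_kronVec_left {G : Matrix l (m × m) R} {X : Matrix m n R}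
    (h : Annihilates₂ G X) (u : n → R) (v : m → R) : G *ᵥ ((X *ᵥ u) ⊗ᵥ v) = 0 := by
  simpa using mulVec_kronVec_eq_zero h.1 u v

theorem Annihilates₂.mulVec_kronVec_right {G : Matrix l (m × m) R} {X : Matrix m n R}
    (h : Annihilates₂ G X) (v : m → R) (u : n → R) : G *ᵥ (v ⊗ᵥ (X *ᵥ u)) = 0 := by
  simpa using mulVec_kronVec_eq_zero h.2 v u

theorem Annihilates₃.mulVec_kronVec_left {G : Matrix l (m × m × m) R} {X : Matrix m n R}
    (h : Annihilates₃ G X) (u : n → R) (v w : m → R) : G *ᵥ ((X *ᵥ u) ⊗ᵥ v ⊗ᵥ w) = 0 := by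
  simpa using mulVec_kronVec_eq_zero h.1 u (v ⊗ᵥ w)

theorem Annihilates₃.mulVec_kronVec_mid {G : Matrix l (m × m × m) R} {X : Matrix m n R}
    (h : Annihilates₃ G X) (v : m → R) (u : n → R) (w : m → R) :
    G *ᵥ (v ⊗ᵥ (X *ᵥ u) ⊗ᵥ w) = 0 := by
  simpa [kronecker_mulVec_kronVec] using mulVec_kronVec_eq_zero h.2.1 v (u ⊗ᵥ w)

theorem Annihilates₃.mulVec_kronVec_right {G : Matrix l (m × m × m) R} {X : Matrix m n R}
    (h : Annihilates₃ G X) (v w : m → R) (u : n → R) : G *ᵥ (v ⊗ᵥ w ⊗ᵥ (X *ᵥ u)) = 0 := by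
  simpa [kronecker_mulVec_kronVec] using mulVec_kronVec_eq_zero h.2.2 v (w ⊗ᵥ u)

theorem Annihilates₃.mid_slot_mul {G : Matrix l (m × m × m) R} {X : Matrix m n R}
    (h : Annihilates₃ G X) {p : Type*} [Fintype p] (Y : Matrix n p R) :
    G * ((1 : Matrix m m R) ⊗ₖ ((X * Y) ⊗ₖ (1 : Matrix m m R))) = 0 := by
  have hsplit : (1 : Matrix m m R) ⊗ₖ ((X * Y) ⊗ₖ (1 : Matrix m m R)) =
      ((1 : Matrix m m R) ⊗ₖ (X ⊗ₖ (1 : Matrix m m R))) *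
        ((1 : Matrix m m R) ⊗ₖ (Y ⊗ₖ (1 : Matrix m m R))) := by
    rw [← mul_kronecker_mul, ← mul_kronecker_mul, Matrix.mul_one]
  rw [hsplit, ← Matrix.mul_assoc, h.2.1, Matrix.zero_mul]

theorem annihilates₂_of_exp [Fintype l] {G : Matrix l (m × m) ℂ} {A : Matrix m m ℂ}
    (hl : ∀ x : ℝ, G * (NormedSpace.exp ((x : ℂ) • A) ⊗ₖ (1 : Matrix m m ℂ)) = G)
    (hr : ∀ x : ℝ, G * ((1 : Matrix m m ℂ) ⊗ₖ NormedSpace.exp ((x : ℂ) • A)) = G) :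
    Annihilates₂ G A :=
  ⟨mul_map_eq_zero_of_mul_map_exp_eq A ((kroneckerBilinear (R := ℂ)).flip 1) G hl,
    mul_map_eq_zero_of_mul_map_exp_eq A (kroneckerBilinear (R := ℂ) 1) G hr⟩

theorem annihilates₃_of_exp [Fintype l] {G : Matrix l (m × m × m) ℂ} {A : Matrix m m ℂ}
    (hl : ∀ x : ℝ,
      G * (NormedSpace.exp ((x : ℂ) • A) ⊗ₖ (1 : Matrix (m × m) (m × m) ℂ)) = G)
    (hm : ∀ x : ℝ, G * ((1 : Matrix m m ℂ) ⊗ₖ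
      (NormedSpace.exp ((x : ℂ) • A) ⊗ₖ (1 : Matrix m m ℂ))) = G)
    (hr : ∀ x : ℝ, G * ((1 : Matrix m m ℂ) ⊗ₖ
      ((1 : Matrix m m ℂ) ⊗ₖ NormedSpace.exp ((x : ℂ) • A))) = G) :
    Annihilates₃ G A :=
  ⟨mul_map_eq_zero_of_mul_map_exp_eq A ((kroneckerBilinear (R := ℂ)).flip 1) G hl,
    mul_map_eq_zero_of_mul_map_exp_eq A
      (kroneckerBilinear (R := ℂ) 1 ∘ₗ (kroneckerBilinear (R := ℂ)).flip 1) G hm,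
    mul_map_eq_zero_of_mul_map_exp_eq A
      (kroneckerBilinear (R := ℂ) 1 ∘ₗ kroneckerBilinear (R := ℂ) 1) G hr⟩

structure PurelyCollisional (F₁ : Matrix m m R) (F₂ : Matrix m (m × m) R)
    (F₃ : Matrix m (m × m × m) R) : Prop where
  two_one : Annihilates₂ F₂ F₁
  two_two : Annihilates₂ F₂ F₂
  two_three : Annihilates₂ F₂ F₃
  three_one : Annihilates₃ F₃ F₁
  three_two : Annihilates₃ F₃ F₂
  three_three : Annihilates₃ F₃ F₃

end KroneckerVector

section Derivatives

variable {𝔸 m n : Type*} [NormedCommRing 𝔸] [NormedAlgebra ℝ 𝔸] {t : ℝ}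

theorem HasDerivAt.const_mulVec {l : Type*} [Fintype n] (M : Matrix l n 𝔸) {v : ℝ → n → 𝔸}
    {v' : n → 𝔸} (h : HasDerivAt v v' t) : HasDerivAt (fun s => M *ᵥ v s) (M *ᵥ v') t := by
  rw [hasDerivAt_pi] at h ⊢
  exact fun i => HasDerivAt.fun_sum fun j _ => (h j).const_mul (M i j)

theorem HasDerivAt.kronVec {u : ℝ → m → 𝔸} {v : ℝ → n → 𝔸} {u' : m → 𝔸} {v' : n → 𝔸}
    (hu : HasDerivAt u u' t) (hv : HasDerivAt v v' t) :
    HasDerivAt (fun s => u s ⊗ᵥ v s) (u' ⊗ᵥ v t + u t ⊗ᵥ v') t := by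
  rw [hasDerivAt_pi] at hu hv ⊢
  exact fun q => (hu q.1).mul (hv q.2)

theorem HasDerivAt.reindex {u : ℝ → m → 𝔸} {u' : m → 𝔸} (h : HasDerivAt u u' t) (e : n → m) :
    HasDerivAt (fun s => u s ∘ e) (u' ∘ e) t :=
  hasDerivAt_pi.2 fun i => hasDerivAt_pi.1 h (e i)

section Collision

variable [Fintype m] [DecidableEq m] {F₁ : Matrix m m 𝔸} {F₂ : Matrix m (m × m) 𝔸}
  {F₃ : Matrix m (m × m × m) 𝔸}

def collision (F₂ : Matrix m (m × m) 𝔸) (F₃ : Matrix m (m × m × m) 𝔸) (v : m → 𝔸) : m → 𝔸 :=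
  F₂ *ᵥ (v ⊗ᵥ v) + F₃ *ᵥ (v ⊗ᵥ v ⊗ᵥ v)

theorem PurelyCollisional.hasDerivAt_collision (h : PurelyCollisional F₁ F₂ F₃)
    {f : ℝ → m → 𝔸} (hf : HasDerivAt f (F₁ *ᵥ f t + collision F₂ F₃ (f t)) t) :
    HasDerivAt (fun s => collision F₂ F₃ (f s)) 0 t := by
  refine (((hf.kronVec hf).const_mulVec F₂).add
    ((hf.kronVec (hf.kronVec hf)).const_mulVec F₃)).congr_deriv ?_
  simp only [collision, add_kronVec, kronVec_add, mulVec_add, h.two_one.mulVec_kronVec_left,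
    h.two_one.mulVec_kronVec_right, h.two_two.mulVec_kronVec_left,
    h.two_two.mulVec_kronVec_right, h.two_three.mulVec_kronVec_left,
    h.two_three.mulVec_kronVec_right, h.three_one.mulVec_kronVec_left,
    h.three_one.mulVec_kronVec_mid, h.three_one.mulVec_kronVec_right,
    h.three_two.mulVec_kronVec_left, h.three_two.mulVec_kronVec_mid,
    h.three_two.mulVec_kronVec_right, h.three_three.mulVec_kronVec_left,
    h.three_three.mulVec_kronVec_mid, h.three_three.mulVec_kronVec_right, add_zero]

end Collision

end Derivatives

theorem eq_of_hasDerivAt_mulVec_add_const {𝕜 m : Type*} [RCLike 𝕜] [Fintype m] (A : Matrix m m 𝕜)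
    (c : m → 𝕜) {u v : ℝ → m → 𝕜}
    (hu : ∀ t, HasDerivAt u (A *ᵥ u t + c) t) (hv : ∀ t, HasDerivAt v (A *ᵥ v t + c) t)
    (h₀ : u 0 = v 0) : u = v :=
  ODE_solution_unique_univ (v := fun _ x => A *ᵥ x + c) (s := fun _ => Set.univ) (t₀ := 0)
    (fun _ => ((mulVecLin A).toContinuousLinearMap.lipschitz.add
      (LipschitzWith.const c)).lipschitzOnWith)
    (fun t => ⟨hu t, trivial⟩) (fun t => ⟨hv t, trivial⟩) h₀

@[simps]
def piFinThreeEquiv (α : Type*) : (Fin 3 → α) ≃ α × α × α where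
  toFun f := (f 0, f 1, f 2)
  invFun p := ![p.1, p.2.1, p.2.2]
  left_inv f := by ext i; fin_cases i <;> rfl
  right_inv _ := rfl

section CarlemanLifts

variable {Q : ℕ} (F₁ : Matrix (Fin Q) (Fin Q) ℂ) (F₂ : Matrix (Fin Q) (Fin Q × Fin Q) ℂ)
  (F₃ : Matrix (Fin Q) (Fin Q × Fin Q × Fin Q) ℂ)

theorem F1lift_one_eq_submatrix :
    F1lift F₁ 1 =
      F₁.submatrix (Equiv.funUnique (Fin 1) (Fin Q)) (Equiv.funUnique (Fin 1) (Fin Q)) := by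
  ext a b
  simp [F1lift]

theorem F2lift_one_eq_submatrix :
    F2lift F₂ 1 =
      F₂.submatrix (Equiv.funUnique (Fin 1) (Fin Q)) (piFinTwoEquiv fun _ => Fin Q) := by
  ext a b
  simp [F2lift]

theorem F3lift_one_eq_submatrix :
    F3lift F₃ 1 = F₃.submatrix (Equiv.funUnique (Fin 1) (Fin Q)) (piFinThreeEquiv (Fin Q)) := by
  ext a b
  simp [F3lift]

theorem F1lift_two_eq_kronecker : F1lift F₁ 2 =
    (F₁ ⊗ₖ 1 + 1 ⊗ₖ F₁).submatrix (piFinTwoEquiv fun _ => Fin Q)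
      (piFinTwoEquiv fun _ => Fin Q) := by
  ext a b
  simp [F1lift, Fin.sum_univ_two, one_apply, show Finset.univ.erase (0 : Fin 2) = {1} by decide,
    show Finset.univ.erase (1 : Fin 2) = {0} by decide]

theorem F2lift_two_eq_kronecker : F2lift F₂ 2 =
    (F₂ ⊗ₖ 1).submatrix (piFinTwoEquiv fun _ => Fin Q) (fun b => ((b 0, b 1), b 2)) +
      (1 ⊗ₖ F₂).submatrix (piFinTwoEquiv fun _ => Fin Q) (fun b => (b 0, b 1, b 2)) := by
  ext a b
  simp [F2lift, Fin.sum_univ_two, one_apply, show Finset.univ.erase (0 : Fin 2) = {1} by decide,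
    show Finset.univ.erase (1 : Fin 2) = {0} by decide]

theorem F3lift_two_eq_kronecker : F3lift F₃ 2 =
    (F₃ ⊗ₖ 1).submatrix (piFinTwoEquiv fun _ => Fin Q) (fun b => ((b 0, b 1, b 2), b 3)) +
      (1 ⊗ₖ F₃).submatrix (piFinTwoEquiv fun _ => Fin Q) (fun b => (b 0, b 1, b 2, b 3)) := by
  ext a b
  simp [F3lift, Fin.sum_univ_two, one_apply, show Finset.univ.erase (0 : Fin 2) = {1} by decide,
    show Finset.univ.erase (1 : Fin 2) = {0} by decide]

theorem F1lift_three_eq_kronecker : F1lift F₁ 3 =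
    (F₁ ⊗ₖ 1 + 1 ⊗ₖ (F₁ ⊗ₖ 1) + 1 ⊗ₖ (1 ⊗ₖ F₁)).submatrix (piFinThreeEquiv (Fin Q))
      (piFinThreeEquiv (Fin Q)) := by
  ext a b
  simp [F1lift, Fin.sum_univ_three, one_apply,
    show Finset.univ.erase (0 : Fin 3) = {1, 2} by decide,
    show Finset.univ.erase (1 : Fin 3) = {0, 2} by decide,
    show Finset.univ.erase (2 : Fin 3) = {0, 1} by decide]
  split_ifs <;> simp_all

theorem F2lift_three_eq_kronecker : F2lift F₂ 3 =
    (F₂ ⊗ₖ 1).submatrix (piFinThreeEquiv (Fin Q)) (fun b => ((b 0, b 1), b 2, b 3)) +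
      (1 ⊗ₖ (F₂ ⊗ₖ 1)).submatrix (piFinThreeEquiv (Fin Q)) (fun b => (b 0, (b 1, b 2), b 3)) +
      (1 ⊗ₖ (1 ⊗ₖ F₂)).submatrix (piFinThreeEquiv (Fin Q)) (fun b => (b 0, b 1, b 2, b 3)) := by
  ext a b
  simp [F2lift, Fin.sum_univ_three, one_apply,
    show Finset.univ.erase (0 : Fin 3) = {1, 2} by decide,
    show Finset.univ.erase (1 : Fin 3) = {0, 2} by decide,
    show Finset.univ.erase (2 : Fin 3) = {0, 1} by decide]
  split_ifs <;> simp_all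

theorem F3lift_three_eq_kronecker : F3lift F₃ 3 =
    (F₃ ⊗ₖ 1).submatrix (piFinThreeEquiv (Fin Q)) (fun b => ((b 0, b 1, b 2), b 3, b 4)) +
      (1 ⊗ₖ (F₃ ⊗ₖ 1)).submatrix (piFinThreeEquiv (Fin Q)) (fun b => (b 0, (b 1, b 2, b 3), b 4)) +
      (1 ⊗ₖ (1 ⊗ₖ F₃)).submatrix (piFinThreeEquiv (Fin Q))
        (fun b => (b 0, b 1, b 2, b 3, b 4)) := by
  ext a b
  simp [F3lift, Fin.sum_univ_three, one_apply,
    show Finset.univ.erase (0 : Fin 3) = {1, 2} by decide,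
    show Finset.univ.erase (1 : Fin 3) = {0, 2} by decide,
    show Finset.univ.erase (2 : Fin 3) = {0, 1} by decide]
  split_ifs <;> simp_all

variable {F₁ F₂ F₃}

theorem F2lift_one_mul_F1lift_two (h : Annihilates₂ F₂ F₁) : F2lift F₂ 1 * F1lift F₁ 2 = 0 := by
  rw [F2lift_one_eq_submatrix, F1lift_two_eq_kronecker]
  simp only [Matrix.mul_add, submatrix_mul_equiv, h.1, h.2, submatrix_zero, Pi.zero_apply,
    add_zero]

theorem F2lift_one_mul_F2lift_two (h : Annihilates₂ F₂ F₂) : F2lift F₂ 1 * F2lift F₂ 2 = 0 := by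
  rw [F2lift_one_eq_submatrix, F2lift_two_eq_kronecker]
  simp only [Matrix.mul_add, submatrix_mul_equiv, h.1, h.2, submatrix_zero, Pi.zero_apply,
    add_zero]

theorem F2lift_one_mul_F3lift_two (h : Annihilates₂ F₂ F₃) : F2lift F₂ 1 * F3lift F₃ 2 = 0 := by
  rw [F2lift_one_eq_submatrix, F3lift_two_eq_kronecker]
  simp only [Matrix.mul_add, submatrix_mul_equiv, h.1, h.2, submatrix_zero, Pi.zero_apply,
    add_zero]

theorem F3lift_one_mul_F1lift_three (h : Annihilates₃ F₃ F₁) :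
    F3lift F₃ 1 * F1lift F₁ 3 = 0 := by
  rw [F3lift_one_eq_submatrix, F1lift_three_eq_kronecker]
  simp only [Matrix.mul_add, submatrix_mul_equiv, h.1, h.2.1, h.2.2, submatrix_zero, Pi.zero_apply,
    add_zero]

theorem F3lift_one_mul_F2lift_three (h : Annihilates₃ F₃ F₂) :
    F3lift F₃ 1 * F2lift F₂ 3 = 0 := by
  rw [F3lift_one_eq_submatrix, F2lift_three_eq_kronecker]
  simp only [Matrix.mul_add, submatrix_mul_equiv, h.1, h.2.1, h.2.2, submatrix_zero, Pi.zero_apply,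
    add_zero]

theorem F3lift_one_mul_F3lift_three (h : Annihilates₃ F₃ F₃) :
    F3lift F₃ 1 * F3lift F₃ 3 = 0 := by
  rw [F3lift_one_eq_submatrix, F3lift_three_eq_kronecker]
  simp only [Matrix.mul_add, submatrix_mul_equiv, h.1, h.2.1, h.2.2, submatrix_zero, Pi.zero_apply,
    add_zero]

theorem F1lift_one_mulVec (v : Fin Q → ℂ) :
    F1lift F₁ 1 *ᵥ (fun a => v (a 0)) = fun a => (F₁ *ᵥ v) (a 0) := by
  rw [F1lift_one_eq_submatrix, submatrix_mulVec_equiv]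
  rfl

theorem F2lift_one_mulVec_prod (v : Fin Q → ℂ) :
    F2lift F₂ 1 *ᵥ (fun b => ∏ i, v (b i)) = fun a => (F₂ *ᵥ (v ⊗ᵥ v)) (a 0) := by
  have hv : (fun b : Fin 2 → Fin Q => ∏ i, v (b i)) ∘ (piFinTwoEquiv fun _ => Fin Q).symm =
      v ⊗ᵥ v := by
    ext p
    simp [Fin.prod_univ_two]
  rw [F2lift_one_eq_submatrix, submatrix_mulVec_equiv, hv]
  rfl

theorem F3lift_one_mulVec_prod (v : Fin Q → ℂ) :
    F3lift F₃ 1 *ᵥ (fun b => ∏ i, v (b i)) = fun a => (F₃ *ᵥ (v ⊗ᵥ v ⊗ᵥ v)) (a 0) := by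
  have hv : (fun b : Fin 3 → Fin Q => ∏ i, v (b i)) ∘ (piFinThreeEquiv (Fin Q)).symm =
      v ⊗ᵥ v ⊗ᵥ v := by
    ext p
    simp [Fin.prod_univ_three, mul_assoc]
  rw [F3lift_one_eq_submatrix, submatrix_mulVec_equiv, hv]
  rfl

end CarlemanLifts

section TruncatedCarleman

variable {Q : ℕ} {F₁ : Matrix (Fin Q) (Fin Q) ℂ} {F₂ : Matrix (Fin Q) (Fin Q × Fin Q) ℂ}
  {F₃ : Matrix (Fin Q) (Fin Q × Fin Q × Fin Q) ℂ}

noncomputable def carlemanField (F₁ : Matrix (Fin Q) (Fin Q) ℂ)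
    (F₂ : Matrix (Fin Q) (Fin Q × Fin Q) ℂ) (F₃ : Matrix (Fin Q) (Fin Q × Fin Q × Fin Q) ℂ)
    (NC k : ℕ)
    (z : (j : ℕ) → (Fin j → Fin Q) → ℂ) : (Fin k → Fin Q) → ℂ :=
  F1lift F₁ k *ᵥ z k + (if k + 1 ≤ NC then F2lift F₂ k *ᵥ z (k + 1) else 0)
    + (if k + 2 ≤ NC then F3lift F₃ k *ᵥ z (k + 2) else 0)

theorem mulVec_ite_mulVec_eq_zero {R l m n : Type*} [Semiring R] [Fintype m] [Fintype n]
    {M : Matrix l m R} {A : Matrix m n R} (h : M * A = 0) (c : Prop) [Decidable c] (x : n → R) :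
    M *ᵥ (if c then A *ᵥ x else 0) = 0 := by
  split_ifs <;> simp [mulVec_mulVec, h]

theorem PurelyCollisional.F2lift_mulVec_add_F3lift_mulVec_carlemanField
    (h : PurelyCollisional F₁ F₂ F₃) (NC : ℕ) (z : (j : ℕ) → (Fin j → Fin Q) → ℂ) :
    F2lift F₂ 1 *ᵥ carlemanField F₁ F₂ F₃ NC 2 z + F3lift F₃ 1 *ᵥ carlemanField F₁ F₂ F₃ NC 3 z
      = 0 := by
  simp only [carlemanField, mulVec_add, mulVec_mulVec,
    F2lift_one_mul_F1lift_two h.two_one, F3lift_one_mul_F1lift_three h.three_one,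
    mulVec_ite_mulVec_eq_zero (F2lift_one_mul_F2lift_two h.two_two),
    mulVec_ite_mulVec_eq_zero (F2lift_one_mul_F3lift_two h.two_three),
    mulVec_ite_mulVec_eq_zero (F3lift_one_mul_F2lift_three h.three_two),
    mulVec_ite_mulVec_eq_zero (F3lift_one_mul_F3lift_three h.three_three), zero_mulVec,
    add_zero]

variable {NC : ℕ} {y : (k : ℕ) → ℝ → (Fin k → Fin Q) → ℂ}

theorem PurelyCollisional.hasDerivAt_one_of_carlemanField (h : PurelyCollisional F₁ F₂ F₃)
    (hNC : 3 ≤ NC) (hy : ∀ k, 1 ≤ k → k ≤ NC → ∀ t : ℝ,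
      HasDerivAt (y k) (carlemanField F₁ F₂ F₃ NC k fun j => y j t) t) (t : ℝ) :
    HasDerivAt (y 1) (F1lift F₁ 1 *ᵥ y 1 t + (F2lift F₂ 1 *ᵥ y 2 0 + F3lift F₃ 1 *ᵥ y 3 0)) t := by
  have hconserved : ∀ s : ℝ, HasDerivAt (fun r => F2lift F₂ 1 *ᵥ y 2 r + F3lift F₃ 1 *ᵥ y 3 r)
      0 s := fun s => by
    have h2 := (hy 2 (by omega) (by omega) s).const_mulVec (F2lift F₂ 1)
    have h3 := (hy 3 (by omega) (by omega) s).const_mulVec (F3lift F₃ 1)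
    rw [← h.F2lift_mulVec_add_F3lift_mulVec_carlemanField NC fun j => y j s]
    exact h2.add h3
  rw [← is_const_of_deriv_eq_zero (fun s => (hconserved s).differentiableAt)
    (fun s => (hconserved s).deriv) t 0]
  simpa only [carlemanField, if_pos (show 1 + 1 ≤ NC by omega), if_pos (show 1 + 2 ≤ NC by omega),
    add_assoc] using hy 1 le_rfl (by omega) t

end TruncatedCarleman

theorem PurelyCollisional.hasDerivAt_reindex_of_collision {Q : ℕ} {F₁ : Matrix (Fin Q) (Fin Q) ℂ}
    {F₂ : Matrix (Fin Q) (Fin Q × Fin Q) ℂ} {F₃ : Matrix (Fin Q) (Fin Q × Fin Q × Fin Q) ℂ}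
    (h : PurelyCollisional F₁ F₂ F₃) {f : ℝ → Fin Q → ℂ}
    (hf : ∀ t, HasDerivAt f (F₁ *ᵥ f t + collision F₂ F₃ (f t)) t) (t : ℝ) :
    HasDerivAt (fun s (a : Fin 1 → Fin Q) => f s (a 0))
      (F1lift F₁ 1 *ᵥ (fun a => f t (a 0)) + fun a => collision F₂ F₃ (f 0) (a 0)) t := by
  have hconserved : ∀ s, HasDerivAt (fun r => collision F₂ F₃ (f r)) 0 s :=
    fun s => h.hasDerivAt_collision (hf s)
  rw [F1lift_one_mulVec, ← is_const_of_deriv_eq_zero (fun s => (hconserved s).differentiableAt)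
    (fun s => (hconserved s).deriv) t 0]
  exact (hf t).reindex fun a : Fin 1 → Fin Q => a 0

theorem carleman_truncation_exact_general
    (Q NC : ℕ) (hNC : 3 ≤ NC)
    (F₁ : Matrix (Fin Q) (Fin Q) ℂ)
    (F₂ : Matrix (Fin Q) (Fin Q × Fin Q) ℂ)
    (F₃ : Matrix (Fin Q) (Fin Q × Fin Q × Fin Q) ℂ)
    (h12 : F₁ * F₂ = -F₂)
    (hexp21 : ∀ x : ℝ,
      F₂ * (NormedSpace.exp ((x : ℂ) • F₁) ⊗ₖ (1 : Matrix (Fin Q) (Fin Q) ℂ)) = F₂)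
    (hexp21' : ∀ x : ℝ,
      F₂ * ((1 : Matrix (Fin Q) (Fin Q) ℂ) ⊗ₖ NormedSpace.exp ((x : ℂ) • F₁)) = F₂)
    (hexp31 : ∀ x : ℝ,
      F₃ * (NormedSpace.exp ((x : ℂ) • F₁) ⊗ₖ (1 : Matrix (Fin Q × Fin Q) (Fin Q × Fin Q) ℂ))
        = F₃)
    (hexp31' : ∀ x : ℝ,
      F₃ * ((1 : Matrix (Fin Q) (Fin Q) ℂ) ⊗ₖ
          (NormedSpace.exp ((x : ℂ) • F₁) ⊗ₖ (1 : Matrix (Fin Q) (Fin Q) ℂ))) = F₃)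
    (hexp31'' : ∀ x : ℝ,
      F₃ * ((1 : Matrix (Fin Q) (Fin Q) ℂ) ⊗ₖ
          ((1 : Matrix (Fin Q) (Fin Q) ℂ) ⊗ₖ NormedSpace.exp ((x : ℂ) • F₁))) = F₃)
    (h22 : F₂ * (F₂ ⊗ₖ (1 : Matrix (Fin Q) (Fin Q) ℂ)) = 0)
    (h22' : F₂ * ((1 : Matrix (Fin Q) (Fin Q) ℂ) ⊗ₖ F₂) = 0)
    (h23 : F₂ * (F₃ ⊗ₖ (1 : Matrix (Fin Q) (Fin Q) ℂ)) = 0)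
    (h23' : F₂ * ((1 : Matrix (Fin Q) (Fin Q) ℂ) ⊗ₖ F₃) = 0)
    (h32 : F₃ * (F₂ ⊗ₖ (1 : Matrix (Fin Q × Fin Q) (Fin Q × Fin Q) ℂ)) = 0)
    (h32' : F₃ * ((1 : Matrix (Fin Q) (Fin Q) ℂ) ⊗ₖ
        ((1 : Matrix (Fin Q) (Fin Q) ℂ) ⊗ₖ F₂)) = 0)
    (h33 : F₃ * (F₃ ⊗ₖ (1 : Matrix (Fin Q × Fin Q) (Fin Q × Fin Q) ℂ)) = 0)
    (h33' : F₃ * ((1 : Matrix (Fin Q) (Fin Q) ℂ) ⊗ₖ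
        (F₃ ⊗ₖ (1 : Matrix (Fin Q) (Fin Q) ℂ))) = 0)
    (h33'' : F₃ * ((1 : Matrix (Fin Q) (Fin Q) ℂ) ⊗ₖ
        ((1 : Matrix (Fin Q) (Fin Q) ℂ) ⊗ₖ F₃)) = 0)
    (f0 : Fin Q → ℂ)
    (y : (k : ℕ) → ℝ → ((Fin k → Fin Q) → ℂ))
    (hy0 : ∀ k, 1 ≤ k → k ≤ NC → y k 0 = fun a => ∏ i, f0 (a i))
    (hyderiv : ∀ k, 1 ≤ k → k ≤ NC → ∀ t : ℝ,
      HasDerivAt (y k)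
        ((F1lift F₁ k).mulVec (y k t)
          + (if k + 1 ≤ NC then (F2lift F₂ k).mulVec (y (k + 1) t) else 0)
          + (if k + 2 ≤ NC then (F3lift F₃ k).mulVec (y (k + 2) t) else 0)) t)
    (f : ℝ → Fin Q → ℂ) (hfinit : f 0 = f0)
    (hf : ∀ t : ℝ, HasDerivAt f
      (F₁.mulVec (f t) + F₂.mulVec (fun p => f t p.1 * f t p.2)
        + F₃.mulVec (fun p => f t p.1 * f t p.2.1 * f t p.2.2)) t) :
    ∀ t : ℝ, 0 ≤ t → y 1 t = fun a => f t (a 0) := by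
  have hF₃F₁ := annihilates₃_of_exp hexp31 hexp31' hexp31''
  have h : PurelyCollisional F₁ F₂ F₃ :=
    { two_one := annihilates₂_of_exp hexp21 hexp21'
      two_two := ⟨h22, h22'⟩
      two_three := ⟨h23, h23'⟩
      three_one := hF₃F₁
      three_two := ⟨h32, by simpa [h12] using hF₃F₁.mid_slot_mul (-F₂), h32'⟩
      three_three := ⟨h33, h33', h33''⟩ }
  have hf' : ∀ t, HasDerivAt f (F₁ *ᵥ f t + collision F₂ F₃ (f t)) t := fun t => by
    have hcubic : f t ⊗ᵥ f t ⊗ᵥ f t = fun p => f t p.1 * f t p.2.1 * f t p.2.2 := by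
      ext p
      simp [mul_assoc]
    rw [collision, hcubic, ← add_assoc]
    exact hf t
  have hc : F2lift F₂ 1 *ᵥ y 2 0 + F3lift F₃ 1 *ᵥ y 3 0 =
      fun a => collision F₂ F₃ (f 0) (a 0) := by
    rw [hy0 2 (by omega) (by omega), hy0 3 (by omega) (by omega), hfinit,
      F2lift_one_mulVec_prod, F3lift_one_mulVec_prod]
    rfl
  have hsol := eq_of_hasDerivAt_mulVec_add_const (F1lift F₁ 1) _
    (h.hasDerivAt_one_of_carlemanField hNC hyderiv) (hc ▸ h.hasDerivAt_reindex_of_collision hf')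
    (by rw [hy0 1 le_rfl (by omega), hfinit]; simp)
  exact fun t _ => congrFun hsol t

/-- **Exactness of the truncated Carleman system for purely collisional dynamics.**
Under the algebraic relations among `F₁, F₂, F₃` (images of `F₂, F₃` in the `(-1)`-eigenspace
of `F₁`, kernels containing the complement of the zero eigenspace tensor powers, and all the
listed vanishing compositions), the Carleman-truncated linear system at truncation order
`N_C ≥ 3` reproduces the nonlinear dynamics exactly: if `y_k(0) = f(0)^{⊗k}` for
`k = 1, …, N_C` and the `y_k` evolve by the truncated Carleman linear ODE
`dy_k/dt = F₁^{(k)} y_k + F₂^{(k)} y_{k+1} + F₃^{(k)} y_{k+2}` (terms beyond index `N_C`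
dropped), then `y₁(t) = f(t)` for all `t ≥ 0`, where `f` solves
`df/dt = F₁ f + F₂ f^{⊗2} + F₃ f^{⊗3}`. -/
theorem carleman_truncation_exact
    (Q NC : ℕ) (hNC : 3 ≤ NC)
    (F₁ : Matrix (Fin Q) (Fin Q) ℂ)
    (F₂ : Matrix (Fin Q) (Fin Q × Fin Q) ℂ)
    (F₃ : Matrix (Fin Q) (Fin Q × Fin Q × Fin Q) ℂ)
    (h12 : F₁ * F₂ = -F₂)
    (h13 : F₁ * F₃ = -F₃)
    (hexp2 : ∀ x : ℝ, NormedSpace.exp ((x : ℂ) • F₁) * F₂ = Complex.exp (-(x : ℂ)) • F₂)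
    (hexp3 : ∀ x : ℝ, NormedSpace.exp ((x : ℂ) • F₁) * F₃ = Complex.exp (-(x : ℂ)) • F₃)
    (hexp21 : ∀ x : ℝ,
      F₂ * (NormedSpace.exp ((x : ℂ) • F₁) ⊗ₖ (1 : Matrix (Fin Q) (Fin Q) ℂ)) = F₂)
    (hexp21' : ∀ x : ℝ,
      F₂ * ((1 : Matrix (Fin Q) (Fin Q) ℂ) ⊗ₖ NormedSpace.exp ((x : ℂ) • F₁)) = F₂)
    (hexp31 : ∀ x : ℝ,
      F₃ * (NormedSpace.exp ((x : ℂ) • F₁) ⊗ₖ (1 : Matrix (Fin Q × Fin Q) (Fin Q × Fin Q) ℂ))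
        = F₃)
    (hexp31' : ∀ x : ℝ,
      F₃ * ((1 : Matrix (Fin Q) (Fin Q) ℂ) ⊗ₖ
          (NormedSpace.exp ((x : ℂ) • F₁) ⊗ₖ (1 : Matrix (Fin Q) (Fin Q) ℂ))) = F₃)
    (hexp31'' : ∀ x : ℝ,
      F₃ * ((1 : Matrix (Fin Q) (Fin Q) ℂ) ⊗ₖ
          ((1 : Matrix (Fin Q) (Fin Q) ℂ) ⊗ₖ NormedSpace.exp ((x : ℂ) • F₁))) = F₃)
    (h22 : F₂ * (F₂ ⊗ₖ (1 : Matrix (Fin Q) (Fin Q) ℂ)) = 0)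
    (h22' : F₂ * ((1 : Matrix (Fin Q) (Fin Q) ℂ) ⊗ₖ F₂) = 0)
    (h23 : F₂ * (F₃ ⊗ₖ (1 : Matrix (Fin Q) (Fin Q) ℂ)) = 0)
    (h23' : F₂ * ((1 : Matrix (Fin Q) (Fin Q) ℂ) ⊗ₖ F₃) = 0)
    (h32 : F₃ * (F₂ ⊗ₖ (1 : Matrix (Fin Q × Fin Q) (Fin Q × Fin Q) ℂ)) = 0)
    (h32' : F₃ * ((1 : Matrix (Fin Q) (Fin Q) ℂ) ⊗ₖ
        ((1 : Matrix (Fin Q) (Fin Q) ℂ) ⊗ₖ F₂)) = 0)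
    (h33 : F₃ * (F₃ ⊗ₖ (1 : Matrix (Fin Q × Fin Q) (Fin Q × Fin Q) ℂ)) = 0)
    (h33' : F₃ * ((1 : Matrix (Fin Q) (Fin Q) ℂ) ⊗ₖ
        (F₃ ⊗ₖ (1 : Matrix (Fin Q) (Fin Q) ℂ))) = 0)
    (h33'' : F₃ * ((1 : Matrix (Fin Q) (Fin Q) ℂ) ⊗ₖ
        ((1 : Matrix (Fin Q) (Fin Q) ℂ) ⊗ₖ F₃)) = 0)
    (f0 : Fin Q → ℂ)
    (y : (k : ℕ) → ℝ → ((Fin k → Fin Q) → ℂ))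
    (hy0 : ∀ k, 1 ≤ k → k ≤ NC → y k 0 = fun a => ∏ i, f0 (a i))
    (hyderiv : ∀ k, 1 ≤ k → k ≤ NC → ∀ t : ℝ,
      HasDerivAt (y k)
        ((F1lift F₁ k).mulVec (y k t)
          + (if k + 1 ≤ NC then (F2lift F₂ k).mulVec (y (k + 1) t) else 0)
          + (if k + 2 ≤ NC then (F3lift F₃ k).mulVec (y (k + 2) t) else 0)) t)
    (f : ℝ → Fin Q → ℂ) (hfinit : f 0 = f0)
    (hf : ∀ t : ℝ, HasDerivAt f
      (F₁.mulVec (f t) + F₂.mulVec (fun p => f t p.1 * f t p.2)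
        + F₃.mulVec (fun p => f t p.1 * f t p.2.1 * f t p.2.2)) t) :
    ∀ t : ℝ, 0 ≤ t → y 1 t = fun a => f t (a 0) :=
  carleman_truncation_exact_general Q NC hNC F₁ F₂ F₃ h12 hexp21 hexp21' hexp31 hexp31' hexp31'' h22
    h22' h23 h23' h32 h32' h33 h33' h33'' f0 y hy0 hyderiv f hfinit hf
end

section
/- Let U be a d-dimensional unitary with columns u_1, ..., u_d, and define the (2d)-dimensional unitary \tilde{U} := |0\rangle\langle 1| \otimes U + |1\rangle\langle 0| \otimes U^\dagger. Then \tilde{U} = \prod_{j=1}^{d}(I - 2|w_j\rangle\langle w_j|), where |w_j\rangle := \frac{1}{\sqrt{2}}(|1\rangle \otimes |j\rangle - |0\rangle \otimes |u_j\rangle), i.e., \tilde{U} factors as a product of d reflections through the unit vectors w_j. -/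
lemma refl_prod {R : Type*} [Ring R] [Algebra ℂ R] {α : Type*} (P : α → R)
    (h : ∀ j k, j ≠ k → P j * P k = 0) :
    ∀ l : List α, l.Nodup →
      (l.map fun j => 1 - (2:ℂ) • P j).prod = 1 - (2:ℂ) • (l.map P).sum := by
  intro l
  induction l with
  | nil => simp
  | cons a l ih =>
    intro hnd
    rw [List.nodup_cons] at hnd
    have hPa : P a * (l.map P).sum = 0 := by
      rw [← List.sum_map_mul_left]
      apply List.sum_eq_zero
      intro x hx
      simp only [List.map_map, List.mem_map] at hx
      obtain ⟨k, hk, rfl⟩ := hx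
      exact h a k (fun e => hnd.1 (e ▸ hk))
    simp only [List.map_cons, List.prod_cons, ih hnd.2]
    rw [sub_mul, one_mul, mul_sub, mul_one, smul_mul_assoc, mul_smul_comm, hPa]
    simp [List.map_cons, List.sum_cons, smul_add, sub_sub]
    abel

/-- **A unitary embeds as a product of Householder reflections.** Let `U` be a `d`-dimensional
unitary with columns `u_j = U|j⟩`, and define the `2d`-dimensional unitary
`Ũ = |0⟩⟨1| ⊗ U + |1⟩⟨0| ⊗ U†`. With `|w_j⟩ = (|1⟩⊗|j⟩ - |0⟩⊗|u_j⟩)/√2`, one has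
`Ũ = ∏_{j=1}^{d} (I - 2|w_j⟩⟨w_j|)`, a product of `d` (commuting) reflections. -/
theorem unitary_embedding_product_of_reflections
    (d : ℕ) (U : Matrix (Fin d) (Fin d) ℂ) (hU : U ∈ Matrix.unitaryGroup (Fin d) ℂ)
    (w : Fin d → (Fin 2 × Fin d → ℂ))
    (hw : w = fun j x =>
      (Real.sqrt 2 : ℂ)⁻¹ *
        ((if x = (1, j) then 1 else 0) - (if x.1 = 0 then U x.2 j else 0)))
    (Ut : Matrix (Fin 2 × Fin d) (Fin 2 × Fin d) ℂ)
    (hUt : Ut = Matrix.of fun x y : Fin 2 × Fin d =>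
      if x.1 = 0 ∧ y.1 = 1 then U x.2 y.2
      else if x.1 = 1 ∧ y.1 = 0 then U.conjTranspose x.2 y.2 else 0) :
    Ut = ((List.finRange d).map fun j =>
        (1 : Matrix (Fin 2 × Fin d) (Fin 2 × Fin d) ℂ)
          - (2 : ℂ) • Matrix.of fun x y : Fin 2 × Fin d => w j x * star (w j y)).prod := by
  set c : ℂ := ((Real.sqrt 2 : ℝ) : ℂ)⁻¹ with hcdef
  have hstarc : star c = c := by
    simp [hcdef, ← Complex.conj_inv]
  have hc2 : c * c = 2⁻¹ := by
    rw [hcdef, ← mul_inv, ← Complex.ofReal_mul, Real.mul_self_sqrt (by norm_num)]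
    norm_num
  have hw0 : ∀ j b, w j (0, b) = -(c * U b j) := by
    intro j b
    rw [hw]
    simp [Prod.ext_iff, mul_comm]
  have hw1 : ∀ (j b : Fin d), w j (1, b) = if b = j then c else 0 := by
    intro j b
    rw [hw]
    by_cases h : b = j <;> simp [h, Prod.ext_iff]
  have hcol : ∀ j k : Fin d, ∑ b, star (U b j) * U b k = if j = k then 1 else 0 := by
    intro j k
    have := congrFun (congrFun hU.1 j) k
    simpa [Matrix.mul_apply, Matrix.one_apply, mul_comm] using this
  have hrow : ∀ b b' : Fin d, ∑ j, U b j * star (U b' j) = if b = b' then 1 else 0 := by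
    intro b b'
    have := congrFun (congrFun hU.2 b) b'
    simpa [Matrix.mul_apply, Matrix.one_apply] using this
  have hip : ∀ j k : Fin d, ∑ z : Fin 2 × Fin d, star (w j z) * w k z
      = if j = k then 1 else 0 := by
    intro j k
    rw [Fintype.sum_prod_type, Fin.sum_univ_two]
    have e0 : ∑ b, star (w j (0, b)) * w k (0, b) = 2⁻¹ * if j = k then 1 else 0 := by
      simp only [hw0, star_neg, star_mul', hstarc, neg_mul_neg]
      rw [← hcol j k, Finset.mul_sum]
      apply Finset.sum_congr rfl
      intro b _
      rw [← hc2]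
      ring
    have e1 : ∑ b, star (w j (1, b)) * w k (1, b) = 2⁻¹ * if j = k then 1 else 0 := by
      simp only [hw1, apply_ite (star : ℂ → ℂ), hstarc, star_zero, ite_mul, mul_ite,
        zero_mul, mul_zero]
      by_cases h : j = k
      · subst h; simp [hc2]
      · simp only [if_neg h, mul_zero]
        apply Finset.sum_eq_zero
        intro b _
        rcases eq_or_ne b j with rfl | hb
        · simp [h]
        · simp [hb]
    rw [e0, e1]
    ring
  have horthP : ∀ j k : Fin d, j ≠ k →
      (Matrix.of fun x y : Fin 2 × Fin d => w j x * star (w j y)) *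
        (Matrix.of fun x y : Fin 2 × Fin d => w k x * star (w k y)) = 0 := by
    intro j k hjk
    ext x y
    rw [Matrix.mul_apply]
    have hterm : ∀ z, (Matrix.of fun x y : Fin 2 × Fin d => w j x * star (w j y)) x z *
        (Matrix.of fun x y : Fin 2 × Fin d => w k x * star (w k y)) z y
        = (w j x * star (w k y)) * (star (w j z) * w k z) := by
      intro z; simp only [Matrix.of_apply]; ring
    simp only [hterm]
    rw [← Finset.mul_sum, hip, if_neg hjk, mul_zero, Matrix.zero_apply]
  rw [refl_prod _ horthP _ (List.nodup_finRange d), ← Fin.sum_univ_def, hUt]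
  ext x y
  obtain ⟨a, b⟩ := x
  obtain ⟨a', b'⟩ := y
  simp only [Matrix.sub_apply, Matrix.smul_apply, Matrix.sum_apply, Matrix.one_apply,
    Matrix.of_apply, smul_eq_mul, Prod.mk.injEq]
  fin_cases a <;> fin_cases a' <;>
    simp only [Fin.mk_zero, Fin.mk_one, Fin.isValue, hw0, hw1, star_neg, star_mul', hstarc,
      star_zero, apply_ite (star : ℂ → ℂ), neg_mul_neg, neg_mul, mul_neg, mul_ite, ite_mul,
      zero_mul, mul_zero, Matrix.conjTranspose_apply, Prod.mk.injEq,
      Fin.zero_eq_one_iff, Fin.one_eq_zero_iff, Nat.succ_ne_self, OfNat.ofNat_ne_one,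
      and_false, false_and, true_and, and_true, if_true, if_false, and_self]
  · simp only [neg_neg]
    have hs : ∑ j, c * U b j * (c * star (U b' j)) = 2⁻¹ * if b = b' then 1 else 0 := by
      rw [← hrow b b', Finset.mul_sum]
      exact Finset.sum_congr rfl fun j _ => by rw [← hc2]; ring
    rw [hs]
    by_cases h : b = b' <;> simp [h]
  · rw [Finset.sum_ite_eq]
    simp only [Finset.mem_univ, if_true]
    linear_combination (-2 : ℂ) * U b b' * hc2
  · simp only [apply_ite (Neg.neg : ℂ → ℂ), neg_zero]
    rw [Finset.sum_ite_eq]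
    simp only [Finset.mem_univ, if_true]
    linear_combination (-2 : ℂ) * star (U b' b) * hc2
  · rw [Finset.sum_ite_eq]
    simp only [Finset.mem_univ, if_true, hc2]
    by_cases h : b = b' <;> simp [h]
end
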